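/- arXiv:2407.10051 — 9 statements merged into one kernel-verified Lean document; each statement's English description precedes it below -/
import Mathlib

section
/- For every nonzero element a of the subfield F_{p^t} of F_q, the character sum over Δ satisfies Σ_{x ∈ Δ} χ(ax) = −K_t(a²). -/
/-!
Write `Q = p^t` and `ψ(u) = ζ^{tr u}` for the canonical character of `E = F_Q`. For `x ∈ Δ` we
have `x^Q = x⁻¹`, so `x + x⁻¹ = Tr_{F/E}(x) ∈ E` and, by transitivity of the trace,
`χ(ax) = ψ(a (x + x⁻¹))`. Substituting `x ↦ a x` gives `K(a²) = Σ_{w ≠ 0} ψ(a (w + w⁻¹))`.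
So both sides are sums of `ψ(a u)` over `u ∈ E`, weighted by the number of solutions of
`r + r⁻¹ = u` in `Δ` and in `E^*` respectively. These two counts add up to exactly `2` for every
`u`: each is at most `2`, a solution lying in both `Δ` and `E` is a double root `r = r⁻¹`, and
summed over `u` they give `|Δ| + |E^*| = 2Q`. Hence `Σ_Δ χ(ax) + K(a²) = 2 Σ_u ψ(a u) = 0`.
-/

open Finset

section AddInv

variable {K : Type*} [Field K]

lemma eq_or_eq_inv_of_add_inv_eq {x y : K} (hx : x ≠ 0) (hy : y ≠ 0)
    (h : x + x⁻¹ = y + y⁻¹) : y = x ∨ y = x⁻¹ := by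
  have h0 : (y - x) * (y - x⁻¹) = 0 := by
    linear_combination (-y) * h + mul_inv_cancel₀ hx - mul_inv_cancel₀ hy
  simpa only [mul_eq_zero, sub_eq_zero] using h0

variable [DecidableEq K] {c : K}

lemma card_le_two_of_add_inv_eq {s : Finset K} (hs : ∀ x ∈ s, x ≠ 0 ∧ x + x⁻¹ = c) :
    #s ≤ 2 := by
  obtain rfl | ⟨x, hx⟩ := s.eq_empty_or_nonempty
  · simp
  have hsub : s ⊆ {x, x⁻¹} := by
    intro y hy
    obtain ⟨hx0, hxc⟩ := hs x hx
    obtain ⟨hy0, hyc⟩ := hs y hy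
    rcases eq_or_eq_inv_of_add_inv_eq hx0 hy0 (hxc.trans hyc.symm) with rfl | rfl <;> simp
  exact (card_le_card hsub).trans card_le_two

lemma card_add_card_le_two_of_add_inv_eq {s t : Finset K}
    (hst : ∀ x ∈ s ∪ t, x ≠ 0 ∧ x + x⁻¹ = c) (hinter : ∀ x ∈ s ∩ t, x = x⁻¹) :
    #s + #t ≤ 2 := by
  rw [← card_union_add_card_inter]
  obtain hempty | ⟨z, hz⟩ := (s ∩ t).eq_empty_or_nonempty
  · simpa [hempty] using card_le_two_of_add_inv_eq hst
  -- a common element is a double root `z = z⁻¹` of `X + X⁻¹ = c`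
  have hsub : s ∪ t ⊆ {z} := by
    intro y hy
    obtain ⟨hz0, hzc⟩ := hst z (inter_subset_union hz)
    obtain ⟨hy0, hyc⟩ := hst y hy
    rcases eq_or_eq_inv_of_add_inv_eq hz0 hy0 (hzc.trans hyc.symm) with rfl | rfl
    · simp
    · simp [← hinter z hz]
  have h1 := card_le_card hsub
  have h2 := card_le_card (inter_subset_union.trans hsub)
  rw [card_singleton] at h1 h2
  omega

end AddInv

lemma FiniteField.exists_isPrimitiveRoot_of_dvd {F : Type*} [Field F] [Finite F] {n : ℕ}
    [NeZero n] (hn : n ∣ Nat.card F - 1) : ∃ ζ : F, IsPrimitiveRoot ζ n := by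
  refine card_rootsOfUnity_eq_iff_exists_isPrimitiveRoot.mp ?_
  rw [rootsOfUnity_eq_ker, IsCyclic.card_powMonoidHom_ker, Nat.card_units, Nat.gcd_eq_right hn]

noncomputable def traceAddChar {R : Type*} [CommMonoid R] {p : ℕ} [NeZero p] (E : Type*)
    [CommRing E] [Algebra (ZMod p) E] {ζ : R} (hζ : ζ ^ p = 1) : AddChar E R :=
  (AddChar.zmodChar p hζ).compAddMonoidHom (Algebra.trace (ZMod p) E).toAddMonoidHom

lemma traceAddChar_apply {R : Type*} [CommMonoid R] {p : ℕ} [NeZero p] {E : Type*}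
    [CommRing E] [Algebra (ZMod p) E] {ζ : R} (hζ : ζ ^ p = 1) (x : E) :
    traceAddChar E hζ x = ζ ^ (Algebra.trace (ZMod p) E x).val :=
  rfl

lemma traceAddChar_isPrimitive {R : Type*} [CommRing R] {p : ℕ} [Fact p.Prime] (E : Type*)
    [Field E] [Finite E] [Algebra (ZMod p) E] {ζ : R} (hζ : IsPrimitiveRoot ζ p) :
    (traceAddChar E hζ.pow_eq_one).IsPrimitive := by
  refine AddChar.IsPrimitive.of_ne_one (AddChar.ne_one_iff.mpr ?_)
  obtain ⟨b, hb⟩ := Algebra.trace_surjective (ZMod p) E 1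
  refine ⟨b, ?_⟩
  rw [traceAddChar_apply, hb, ZMod.val_one, pow_one]
  exact hζ.ne_one (Fact.out : p.Prime).one_lt

lemma Module.finrank_eq_of_card_eq_pow {K V : Type*} [Field K] [Fintype K] [AddCommGroup V]
    [Module K V] [Fintype V] {n : ℕ} (h : Fintype.card V = Fintype.card K ^ n) :
    Module.finrank K V = n :=
  Nat.pow_right_injective (Fintype.one_lt_card (α := K))
    ((Module.card_eq_pow_finrank (K := K) (V := V)).symm.trans h)

lemma trace_algebraMap_mul {R S T : Type*} [CommRing R] [CommRing S] [CommRing T] [Algebra R S]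
    [Algebra S T] [Algebra R T] [IsScalarTower R S T] [Module.Free R S] [Module.Finite R S]
    [Module.Free S T] [Module.Finite S T] (a : S) (x : T) :
    Algebra.trace R T (algebraMap S T a * x) = Algebra.trace R S (a * Algebra.trace S T x) := by
  rw [← Algebra.smul_def, ← Algebra.trace_trace (S := S), map_smul, smul_eq_mul]

lemma sum_compl_zero_sq_mul_add_inv {K M : Type*} [Field K] [Fintype K] [DecidableEq K]
    [AddCommMonoid M] {a : K} (ha : a ≠ 0) (f : K → M) :
    ∑ x ∈ ({0}ᶜ : Finset K), f (a ^ 2 * x + x⁻¹) = ∑ w ∈ ({0}ᶜ : Finset K), f (a * (w + w⁻¹)) := by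
  refine sum_nbij' (a * ·) (a⁻¹ * ·) (by simp [ha]) (by simp [ha]) (by simp [ha]) (by simp [ha])
    fun x hx => ?_
  rw [mem_compl, mem_singleton] at hx
  congr 1
  field_simp

open Polynomial in
lemma pow_eq_inv_of_mem_nthRootsFinset_one {R : Type*} [Field R] {n : ℕ} {x : R}
    (hx : x ∈ nthRootsFinset (n + 1) (1 : R)) : x ^ n = x⁻¹ :=
  eq_inv_of_mul_eq_one_left (by rwa [mem_nthRootsFinset n.succ_pos, pow_succ] at hx)

section QuadraticExtension

open Polynomial

variable {E F : Type*} [Field E] [Fintype E] [Field F] [Fintype F] [Algebra E F]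

lemma card_nthRootsFinset_card_add_one (hEF : Module.finrank E F = 2) :
    #(nthRootsFinset (Fintype.card E + 1) (1 : F)) = Fintype.card E + 1 := by
  have hcard : Nat.card F = Fintype.card E ^ 2 := by
    rw [Nat.card_eq_fintype_card, Module.card_eq_pow_finrank (K := E), hEF]
  have hdvd : Fintype.card E + 1 ∣ Nat.card F - 1 := by
    rw [hcard, ← one_pow 2, Nat.sq_sub_sq]
    exact dvd_mul_right _ _
  obtain ⟨ζ, hζ⟩ := FiniteField.exists_isPrimitiveRoot_of_dvd hdvd
  exact hζ.card_nthRootsFinset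

lemma algebraMap_trace_eq_add_pow_card (hEF : Module.finrank E F = 2) (x : F) :
    algebraMap E F (Algebra.trace E F x) = x + x ^ Fintype.card E := by
  simp [FiniteField.algebraMap_trace_eq_sum_pow, hEF, sum_range_succ]

lemma algebraMap_trace_eq_add_inv (hEF : Module.finrank E F = 2) {x : F}
    (hx : x ∈ nthRootsFinset (Fintype.card E + 1) (1 : F)) :
    algebraMap E F (Algebra.trace E F x) = x + x⁻¹ := by
  rw [algebraMap_trace_eq_add_pow_card hEF, pow_eq_inv_of_mem_nthRootsFinset_one hx]

variable [DecidableEq E]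

lemma card_fiber_add_card_fiber_le_two (hEF : Module.finrank E F = 2) (u : E) :
    #{x ∈ nthRootsFinset (Fintype.card E + 1) (1 : F) | Algebra.trace E F x = u}
      + #{w ∈ ({0}ᶜ : Finset E) | w + w⁻¹ = u} ≤ 2 := by
  classical
  rw [← card_image_of_injective _ (algebraMap E F).injective]
  refine card_add_card_le_two_of_add_inv_eq (c := algebraMap E F u) ?_ ?_
  · intro x hx
    rcases mem_union.1 hx with hx | hx
    · obtain ⟨hxΔ, rfl⟩ := mem_filter.1 hx
      exact ⟨ne_zero_of_mem_nthRootsFinset one_ne_zero hxΔ,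
        (algebraMap_trace_eq_add_inv hEF hxΔ).symm⟩
    · obtain ⟨w, hw, rfl⟩ := mem_image.1 hx
      obtain ⟨hw0, rfl⟩ := mem_filter.1 hw
      simpa using hw0
  -- an element of `E` is fixed by `x ↦ x ^ #E`, an element of `Δ` is inverted by it
  · intro x hx
    obtain ⟨hxs, hxt⟩ := mem_inter.1 hx
    obtain ⟨w, -, rfl⟩ := mem_image.1 hxt
    rw [← pow_eq_inv_of_mem_nthRootsFinset_one (mem_filter.1 hxs).1, ← map_pow,
      FiniteField.pow_card]

lemma card_fiber_add_card_fiber_eq_two (hEF : Module.finrank E F = 2) (u : E) :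
    #{x ∈ nthRootsFinset (Fintype.card E + 1) (1 : F) | Algebra.trace E F x = u}
      + #{w ∈ ({0}ᶜ : Finset E) | w + w⁻¹ = u} = 2 := by
  have hsum : ∑ u, (#{x ∈ nthRootsFinset (Fintype.card E + 1) (1 : F) | Algebra.trace E F x = u}
      + #{w ∈ ({0}ᶜ : Finset E) | w + w⁻¹ = u}) = ∑ _u : E, 2 := by
    rw [sum_add_distrib, ← card_eq_sum_card_fiberwise (fun _ _ => mem_coe.2 (mem_univ _)),
      ← card_eq_sum_card_fiberwise (fun _ _ => mem_coe.2 (mem_univ _)),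
      card_nthRootsFinset_card_add_one hEF, card_compl, card_singleton, sum_const, card_univ,
      smul_eq_mul]
    have := Fintype.card_pos (α := E)
    omega
  exact (sum_eq_sum_iff_of_le fun u _ => card_fiber_add_card_fiber_le_two hEF u).mp hsum u
    (mem_univ u)

lemma sum_nthRootsFinset_add_sum_compl_zero {M : Type*} [AddCommMonoid M]
    (hEF : Module.finrank E F = 2) (f : E → M) :
    ∑ x ∈ nthRootsFinset (Fintype.card E + 1) (1 : F), f (Algebra.trace E F x)
      + ∑ w ∈ ({0}ᶜ : Finset E), f (w + w⁻¹) = 2 • ∑ u, f u := by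
  rw [← sum_fiberwise' _ (Algebra.trace E F), ← sum_fiberwise' _ (fun w => w + w⁻¹),
    ← sum_add_distrib, smul_sum]
  refine sum_congr rfl fun u _ => ?_
  rw [sum_const, sum_const, ← add_smul, card_fiber_add_card_fiber_eq_two hEF]

end QuadraticExtension

theorem stmt0_general (p t : ℕ) [Fact p.Prime]
    (E F : Type) [Field E] [Fintype E] [DecidableEq E] [Algebra (ZMod p) E]
    [Field F] [Fintype F] [DecidableEq F] [Algebra (ZMod p) F]
    (hE : Fintype.card E = p ^ t) (hF : Fintype.card F = p ^ (2 * t))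
    (ι : E →ₐ[ZMod p] F)
    (ζ : ℂ) (hζ : ζ = Complex.exp (2 * Real.pi * Complex.I / p))
    (χ : F → ℂ) (hχ : ∀ x, χ x = ζ ^ (Algebra.trace (ZMod p) F x).val)
    (K : E → ℂ)
    (hK : ∀ a : E, K a = ∑ x ∈ ({0}ᶜ : Finset E), ζ ^ (Algebra.trace (ZMod p) E (a * x + x⁻¹)).val)
    (Δ : Finset F) (hΔ : Δ = univ.filter (fun x : F => x ^ (p ^ t + 1) = 1))
    (a : E) (ha : a ≠ 0) :
    ∑ x ∈ Δ, χ (ι a * x) = - K (a ^ 2) := by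
  let _ : Algebra E F := ι.toAlgebra
  have : IsScalarTower (ZMod p) E F := .of_algebraMap_eq fun x => (ι.commutes x).symm
  have hEF : Module.finrank E F = 2 :=
    Module.finrank_eq_of_card_eq_pow (by rw [hF, hE, ← pow_mul, mul_comm])
  have hζp : IsPrimitiveRoot ζ p := hζ ▸ Complex.isPrimitiveRoot_exp p (Fact.out : p.Prime).ne_zero
  set ψ := (traceAddChar E hζp.pow_eq_one).mulShift a
  have hΔ' : Δ = Polynomial.nthRootsFinset (Fintype.card E + 1) (1 : F) := by
    ext x
    simp [hΔ, hE, Polynomial.mem_nthRootsFinset]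
  have hlhs : ∑ x ∈ Δ, χ (ι a * x) = ∑ x ∈ Δ, ψ (Algebra.trace E F x) := by
    refine sum_congr rfl fun x _ => ?_
    rw [hχ, show ι a * x = algebraMap E F a * x from rfl, trace_algebraMap_mul]
    rfl
  have hrhs : K (a ^ 2) = ∑ w ∈ ({0}ᶜ : Finset E), ψ (w + w⁻¹) := by
    rw [hK]
    exact sum_compl_zero_sq_mul_add_inv ha (traceAddChar E hζp.pow_eq_one)
  have hψ : ∑ u, ψ u = 0 := by
    simpa [ψ, AddChar.mulShift_apply, ha, mul_comm] using
      AddChar.sum_mulShift a (traceAddChar_isPrimitive E hζp)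
  have hsum := sum_nthRootsFinset_add_sum_compl_zero hEF ψ
  rw [← hΔ', hψ, smul_zero] at hsum
  rw [hlhs, hrhs]
  exact eq_neg_of_add_eq_zero_left hsum

/-- For every nonzero element `a` of the subfield `F_{p^t}` of `F_q`,
`Σ_{x ∈ Δ} χ(ax) = -K_t(a²)`, where `K_t` is the Kloosterman sum over `F_{p^t}`. -/
theorem stmt0 (p t : ℕ) [Fact p.Prime] (ht : 2 < t)
    (E F : Type) [Field E] [Fintype E] [DecidableEq E] [Algebra (ZMod p) E]
    [Field F] [Fintype F] [DecidableEq F] [Algebra (ZMod p) F]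
    (hE : Fintype.card E = p ^ t) (hF : Fintype.card F = p ^ (2 * t))
    (ι : E →ₐ[ZMod p] F)
    (ζ : ℂ) (hζ : ζ = Complex.exp (2 * Real.pi * Complex.I / p))
    (χ : F → ℂ) (hχ : ∀ x, χ x = ζ ^ (Algebra.trace (ZMod p) F x).val)
    (K : E → ℂ)
    (hK : ∀ a : E, K a = ∑ x ∈ ({0}ᶜ : Finset E), ζ ^ (Algebra.trace (ZMod p) E (a * x + x⁻¹)).val)
    (Δ : Finset F) (hΔ : Δ = univ.filter (fun x : F => x ^ (p ^ t + 1) = 1))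
    (a : E) (ha : a ≠ 0) :
    ∑ x ∈ Δ, χ (ι a * x) = - K (a ^ 2) :=
  stmt0_general p t E F hE hF ι ζ hζ χ hχ K hK Δ hΔ a ha
end

section
/- For every a ∈ F_q^* there is exactly one element v ∈ Γ such that Tr_{q/t}(av) = 0. -/
/-!
Since `[F : E] = 2`, the kernel of the trace is a line `E u`, so for `y ≠ 0` the trace of `y`
vanishes iff `(y u⁻¹) ^ (n - 1) = 1`, where `n = |E|`. Writing `a u⁻¹ = α ^ k` and using that `α`
has order `n² - 1 = (n + 1)(n - 1)`, the trace of `a α ^ j` vanishes iff `n + 1 ∣ k + j`, and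
exactly one `j ≤ n` satisfies this.
-/

theorem LinearMap.exists_ker_eq_span_singleton_of_finrank_eq_two {K V : Type*} [Field K]
    [AddCommGroup V] [Module K V] (hV : Module.finrank K V = 2) {f : V →ₗ[K] K} (hf : f ≠ 0) :
    ∃ u : V, u ≠ 0 ∧ ∀ x, f x = 0 ↔ ∃ c : K, c • u = x := by
  have : FiniteDimensional K V := Module.finite_of_finrank_eq_succ hV
  have hker : Module.finrank K (LinearMap.ker f) = 1 := by
    have := f.finrank_range_add_finrank_ker
    rw [LinearMap.range_eq_top.mpr (LinearMap.surjective_of_ne_zero hf), finrank_top,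
      Module.finrank_self, hV] at this
    omega
  obtain ⟨⟨u, hu⟩, hu0, hspan⟩ := finrank_eq_one_iff'.mp hker
  refine ⟨u, fun h ↦ hu0 (Subtype.ext h), fun x ↦ ⟨fun hx ↦ ?_, ?_⟩⟩
  · obtain ⟨c, hc⟩ := hspan ⟨x, hx⟩
    exact ⟨c, congrArg Subtype.val hc⟩
  · rintro ⟨c, rfl⟩
    rw [map_smul, LinearMap.mem_ker.mp hu, smul_zero]

theorem Subfield.mem_iff_pow_card_sub_one_eq_one {F : Type*} [Field F] (E : Subfield F)
    [Fintype E] {y : F} (hy : y ≠ 0) : y ∈ E ↔ y ^ (Fintype.card E - 1) = 1 := by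
  classical
  have hE : ∀ z : E, z ≠ 0 → (z : F) ^ (Fintype.card E - 1) = 1 := fun z hz ↦ by
    rw [← E.coe_pow, FiniteField.pow_card_sub_one_eq_one z hz, E.coe_one]
  refine ⟨fun hyE ↦ hE ⟨y, hyE⟩ (by simpa [Subtype.ext_iff] using hy), fun hpow ↦ ?_⟩
  have hpos : 0 < Fintype.card E - 1 := Nat.sub_pos_of_lt Fintype.one_lt_card
  set nonzeroE : Finset F := ({0}ᶜ : Finset E).map (Function.Embedding.subtype _)
  have hsub : nonzeroE ⊆ Polynomial.nthRootsFinset (Fintype.card E - 1) (1 : F) := by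
    intro z hz
    obtain ⟨z, hz0, rfl⟩ := Finset.mem_map.mp hz
    rw [Polynomial.mem_nthRootsFinset hpos]
    exact hE z (by simpa using hz0)
  have hcard : (Polynomial.nthRootsFinset (Fintype.card E - 1) (1 : F)).card ≤ nonzeroE.card := by
    rw [Finset.card_map, Finset.card_compl, Finset.card_singleton]
    exact (Multiset.toFinset_card_le _).trans (Polynomial.card_nthRoots _ _)
  have hy' : y ∈ nonzeroE := by
    rw [Finset.eq_of_subset_of_card_le hsub hcard, Polynomial.mem_nthRootsFinset hpos]
    exact hpow
  obtain ⟨z, -, rfl⟩ := Finset.mem_map.mp hy'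
  exact z.2

theorem Subfield.exists_forall_trace_eq_zero_iff {F : Type*} [Field F] [Finite F]
    (E : Subfield F) [Fintype E] (hE : Module.finrank E F = 2) :
    ∃ u : F, u ≠ 0 ∧ ∀ y : F, y ≠ 0 →
      (Algebra.trace E F y = 0 ↔ (y * u⁻¹) ^ (Fintype.card E - 1) = 1) := by
  obtain ⟨u, hu, hker⟩ :=
    LinearMap.exists_ker_eq_span_singleton_of_finrank_eq_two hE (Algebra.trace_ne_zero E F)
  refine ⟨u, hu, fun y hy ↦ ?_⟩
  rw [hker, ← E.mem_iff_pow_card_sub_one_eq_one (mul_ne_zero hy (inv_ne_zero hu))]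
  constructor
  · rintro ⟨c, rfl⟩
    rw [Subfield.smul_def, smul_eq_mul, mul_inv_cancel_right₀ hu]
    exact c.2
  · intro h
    exact ⟨⟨y * u⁻¹, h⟩, by rw [Subfield.smul_def, smul_eq_mul, inv_mul_cancel_right₀ hu]⟩

theorem pow_pow_eq_one_iff_dvd_of_orderOf_eq_mul {G : Type*} [Monoid G] {g : G} {d e : ℕ}
    (hg : orderOf g = d * e) (he : 0 < e) (i : ℕ) : (g ^ i) ^ e = 1 ↔ d ∣ i := by
  rw [← pow_mul, ← orderOf_dvd_iff_pow_eq_one, hg]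
  exact Nat.mul_dvd_mul_iff_right he

theorem Nat.existsUnique_lt_dvd_add (k : ℕ) {d : ℕ} (hd : 0 < d) : ∃! j, j < d ∧ d ∣ k + j := by
  have : NeZero d := ⟨hd.ne'⟩
  simp_rw [← ZMod.natCast_eq_zero_iff, Nat.cast_add, add_eq_zero_iff_eq_neg']
  refine ⟨(-k : ZMod d).val, ⟨ZMod.val_lt _, ZMod.natCast_zmod_val _⟩, ?_⟩
  rintro j ⟨hj, hjk⟩
  rw [← hjk, ZMod.val_cast_of_lt hj]

theorem stmt1_general (p t m : ℕ) (hm : m = 2 * t)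
    (F : Type) [Field F] [Fintype F]
    (hF : Fintype.card F = p ^ m)
    (E : Subfield F) (hE : Nat.card E = p ^ t)
    (α : Fˣ) (hα : ∀ x : Fˣ, x ∈ Subgroup.zpowers α)
    (Γ : Set F) (hΓ : Γ = {v : F | ∃ j ≤ p ^ t, v = (α : F) ^ j})
    (a : F) (ha : a ≠ 0) :
    ∃! v : F, v ∈ Γ ∧ Algebra.trace E F (a * v) = 0 := by
  have : Fintype E := Fintype.ofFinite E
  set n := p ^ t
  rw [Nat.card_eq_fintype_card] at hE
  have hn : 2 ≤ n := hE ▸ Fintype.one_lt_card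
  have hrank : Module.finrank E F = 2 := by
    have h := Module.card_eq_pow_finrank (K := E) (V := F)
    rw [hF, hE, hm, mul_comm, pow_mul] at h
    exact (Nat.pow_right_injective hn h).symm
  have hord : orderOf α = (n + 1) * (n - 1) := by
    rw [orderOf_eq_card_of_forall_mem_zpowers hα, Nat.card_units, Nat.card_eq_fintype_card, hF,
      hm, mul_comm, pow_mul, ← Nat.sq_sub_sq, one_pow]
  obtain ⟨u, hu, htrace⟩ := E.exists_forall_trace_eq_zero_iff hrank
  obtain ⟨k, hk⟩ : ∃ k : ℕ, α ^ k = Units.mk0 (a * u⁻¹) (mul_ne_zero ha (inv_ne_zero hu)) :=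
    mem_powers_iff_mem_zpowers.mpr (hα _)
  have htrace_pow : ∀ j : ℕ, Algebra.trace E F (a * (α : F) ^ j) = 0 ↔ n + 1 ∣ k + j := by
    intro j
    have hα' : a * (α : F) ^ j * u⁻¹ = ((α ^ (k + j) : Fˣ) : F) := by
      rw [pow_add, Units.val_mul, hk, Units.val_mk0, Units.val_pow_eq_pow_val]
      ring
    rw [htrace _ (mul_ne_zero ha (pow_ne_zero _ α.ne_zero)), hE, hα', ← Units.val_pow_eq_pow_val,
      Units.val_eq_one, pow_pow_eq_one_iff_dvd_of_orderOf_eq_mul hord (by omega)]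
  obtain ⟨j, ⟨hj, hdvd⟩, huniq⟩ := Nat.existsUnique_lt_dvd_add k (Nat.succ_pos n)
  subst hΓ
  refine ⟨(α : F) ^ j, ⟨⟨j, Nat.lt_succ_iff.mp hj, rfl⟩, (htrace_pow j).mpr hdvd⟩, ?_⟩
  rintro _ ⟨⟨i, hi, rfl⟩, hi0⟩
  rw [huniq i ⟨Nat.lt_succ_of_le hi, (htrace_pow i).mp hi0⟩]

/-- For every `a ∈ F_q^*` there is exactly one element `v ∈ Γ`
with `Tr_{q/t}(av) = 0`. -/
theorem stmt1 (p t m : ℕ) [Fact p.Prime] (ht : 2 < t) (hm : m = 2 * t)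
    (F : Type) [Field F] [Fintype F] [DecidableEq F] [Algebra (ZMod p) F]
    (hF : Fintype.card F = p ^ m)
    (E : Subfield F) (hE : Nat.card E = p ^ t)
    (α : Fˣ) (hα : ∀ x : Fˣ, x ∈ Subgroup.zpowers α)
    (Γ : Set F) (hΓ : Γ = {v : F | ∃ j ≤ p ^ t, v = (α : F) ^ j})
    (a : F) (ha : a ≠ 0) :
    ∃! v : F, v ∈ Γ ∧ Algebra.trace E F (a * v) = 0 :=
  stmt1_general p t m hm F hF E hE α hα Γ hΓ a ha
end

section
/- For every pair (a,b) ∈ (F_q × F_q) \ {(0,0)} such that a is not a nonzero element of the prime subfield F_p, one has N(a,b) = p^{2m−2} − 1. -/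
/-!
For `a ∉ 𝔽_p` the `𝔽_p`-linear map `x ↦ (Tr x, Tr (a x))` is onto `𝔽_p²`, by nondegeneracy of the
trace form; so for each fixed `y` exactly `q / p²` values of `x` satisfy both trace conditions,
whatever the nonlinear term `y ^ (p ^ t - 1)` is, and there are `q² / p²` solutions in all.
For `a = 0` the shear `(x, y) ↦ (x + y ^ (p ^ t - 1), y)` turns the solution set into a product
of two trace hyperplanes, again of size `q² / p²`. Removing `(0, 0)` gives `p ^ (2m - 2) - 1`.
-/

open Finset Algebra

theorem AddMonoidHom.card_fiber_mul_card_of_surjective {G W F : Type*} [AddGroup G] [Fintype G]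
    [AddMonoid W] [Fintype W] [DecidableEq W] [FunLike F G W] [AddMonoidHomClass F G W]
    (f : F) (hf : Function.Surjective f) (w : W) :
    #{g | f g = w} * Fintype.card W = Fintype.card G := by
  rw [← card_univ (α := G),
    card_eq_sum_card_fiberwise (s := univ) (t := univ) fun g _ ↦ mem_univ (f g),
    sum_congr rfl fun v _ ↦ card_fiber_eq_of_mem_range f (hf v) (hf w), sum_const, card_univ,
    smul_eq_mul, mul_comm]

namespace Algebra

variable {K L : Type*} [Field K] [Fintype K] [Field L] [Fintype L] [Algebra K L]

theorem card_filter_trace_mul_eq_mul_card [DecidableEq K] {b : L} (hb : b ≠ 0) (c : K) :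
    #{y : L | trace K L (b * y) = c} * Fintype.card K = Fintype.card L := by
  have hsurj : Function.Surjective ((trace K L).comp (LinearMap.mulLeft K b)) := fun c ↦ by
    obtain ⟨x, rfl⟩ := trace_surjective K L c
    exact ⟨b⁻¹ * x, by simp [hb]⟩
  exact AddMonoidHom.card_fiber_mul_card_of_surjective _ hsurj c

theorem exists_trace_eq_zero_and_trace_mul_ne_zero {a : L}
    (ha : a ∉ Set.range (algebraMap K L)) :
    ∃ x : L, trace K L x = 0 ∧ trace K L (a * x) ≠ 0 := by
  by_contra! h
  obtain ⟨e, he⟩ := trace_surjective K L 1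
  refine ha ⟨trace K L (a * e), ?_⟩
  suffices ∀ x, trace K L ((a - algebraMap K L (trace K L (a * e))) * x) = 0 by
    have := (traceForm_nondegenerate K L).1 _ fun x ↦ by simpa using this x
    exact (sub_eq_zero.1 this).symm
  intro x
  -- `Tr (a x) = Tr (a e) * Tr x`, because `x - Tr x • e` has trace zero
  have := h (x - trace K L x • e) (by simp [he])
  rw [mul_sub, map_sub, mul_smul_comm, map_smul, smul_eq_mul, sub_eq_zero] at this
  rw [sub_mul, map_sub, this, ← smul_def, map_smul, smul_eq_mul, mul_comm, sub_self]

theorem trace_prod_trace_mul_surjective {a : L} (ha : a ∉ Set.range (algebraMap K L)) :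
    Function.Surjective ((trace K L).prod ((trace K L).comp (LinearMap.mulLeft K a))) := by
  obtain ⟨e, he⟩ := trace_surjective K L 1
  obtain ⟨x₀, hx₀, hax₀⟩ := exists_trace_eq_zero_and_trace_mul_ne_zero ha
  rintro ⟨u, v⟩
  refine ⟨u • e + ((v - u * trace K L (a * e)) / trace K L (a * x₀)) • x₀, Prod.ext ?_ ?_⟩
  · simp [he, hx₀]
  · simp [mul_add, div_mul_cancel₀ _ hax₀]

end Algebra

section TraceSolutions

variable (K : Type*) {L : Type*} [Field K] [DecidableEq K] [Field L] [Fintype L] [Algebra K L]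

noncomputable def traceSolutions (g : L → L) (a b : L) : Finset (L × L) :=
  {xy | trace K L (xy.1 + g xy.2) = 0 ∧ trace K L (a * xy.1 + b * xy.2) = 0}

theorem card_traceSolutions_eq_sum (g : L → L) (a b : L) :
    #(traceSolutions K g a b) =
      ∑ y, #{x : L | trace K L (x + g y) = 0 ∧ trace K L (a * x + b * y) = 0} := by
  rw [traceSolutions, card_filter, Fintype.sum_prod_type, sum_comm]
  exact sum_congr rfl fun y _ ↦ (card_filter _ _).symm

variable {K} [Fintype K]

theorem card_traceSolutions_mul_sq_of_notMem_range (g : L → L) {a : L}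
    (ha : a ∉ Set.range (algebraMap K L)) (b : L) :
    #(traceSolutions K g a b) * Fintype.card K ^ 2 = Fintype.card L ^ 2 := by
  have hfiber (y : L) :
      #{x : L | trace K L (x + g y) = 0 ∧ trace K L (a * x + b * y) = 0} * Fintype.card K ^ 2 =
        Fintype.card L := by
    rw [sq, ← Fintype.card_prod, ← AddMonoidHom.card_fiber_mul_card_of_surjective _
      (trace_prod_trace_mul_surjective ha) (-trace K L (g y), -trace K L (b * y))]
    congr 2
    ext x
    simp [add_eq_zero_iff_eq_neg]
  rw [card_traceSolutions_eq_sum, sum_mul, sum_congr rfl fun y _ ↦ hfiber y, sum_const,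
    card_univ, smul_eq_mul, sq]

theorem card_traceSolutions_zero_mul_sq (g : L → L) {b : L} (hb : b ≠ 0) :
    #(traceSolutions K g 0 b) * Fintype.card K ^ 2 = Fintype.card L ^ 2 := by
  have hA : #{u : L | trace K L u = 0} * Fintype.card K = Fintype.card L := by
    simpa using card_filter_trace_mul_eq_mul_card (K := K) (L := L) one_ne_zero 0
  calc _ = (#{u : L | trace K L u = 0} * Fintype.card K) *
        (#{y : L | trace K L (b * y) = 0} * Fintype.card K) := by
        rw [mul_mul_mul_comm, ← card_product, sq]
        congr 1
        apply card_nbij' (fun xy ↦ (xy.1 + g xy.2, xy.2)) (fun uy ↦ (uy.1 - g uy.2, uy.2)) <;>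
          intro xy <;> simp [traceSolutions]
    _ = Fintype.card L ^ 2 := by rw [hA, card_filter_trace_mul_eq_mul_card hb, sq]

theorem card_traceSolutions_mul_sq (g : L → L) {a b : L} (hab : (a, b) ≠ (0, 0))
    (ha : ¬∃ z : K, z ≠ 0 ∧ algebraMap K L z = a) :
    #(traceSolutions K g a b) * Fintype.card K ^ 2 = Fintype.card L ^ 2 := by
  rcases eq_or_ne a 0 with rfl | ha0
  · exact card_traceSolutions_zero_mul_sq g fun hb ↦ hab (by rw [hb])
  · refine card_traceSolutions_mul_sq_of_notMem_range g ?_ b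
    rintro ⟨z, rfl⟩
    exact ha ⟨z, by rintro rfl; exact ha0 (map_zero _), rfl⟩

end TraceSolutions

theorem stmt3_general (p t m : ℕ) [Fact p.Prime] (ht : 2 < t) (hm : m = 2 * t)
    (F : Type) [Field F] [Fintype F] [Algebra (ZMod p) F]
    (hF : Fintype.card F = p ^ m)
    (N : F → F → ℕ)
    (hN : ∀ a b : F, N a b = Set.ncard {xy : F × F | xy ≠ (0, 0) ∧
      Algebra.trace (ZMod p) F (xy.1 + xy.2 ^ (p ^ t - 1)) = 0 ∧
      Algebra.trace (ZMod p) F (a * xy.1 + b * xy.2) = 0})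
    (a b : F) (hab : (a, b) ≠ (0, 0))
    (ha : ¬ ∃ z : ZMod p, z ≠ 0 ∧ algebraMap (ZMod p) F z = a) :
    N a b = p ^ (2 * m - 2) - 1 := by
  classical
  have hp : p.Prime := Fact.out
  set S := traceSolutions (ZMod p) (fun y : F ↦ y ^ (p ^ t - 1)) a b
  have hS : #S = p ^ (2 * m - 2) := by
    have hcount := card_traceSolutions_mul_sq (fun y : F ↦ y ^ (p ^ t - 1)) hab ha
    rw [ZMod.card, hF, ← pow_mul] at hcount
    refine Nat.eq_of_mul_eq_mul_right (pow_pos hp.pos 2) ?_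
    rw [hcount, ← pow_add]
    congr 1
    omega
  have hzero : ((0, 0) : F × F) ∈ S := by
    have : p ^ t - 1 ≠ 0 := Nat.sub_ne_zero_of_lt (Nat.one_lt_pow (by omega) hp.one_lt)
    simp [S, traceSolutions, zero_pow this]
  rw [hN, ← hS, ← card_erase_of_mem hzero, ← Set.ncard_coe_finset]
  congr 1
  ext xy
  simp [S, traceSolutions, and_comm]

/-- For every pair `(a,b) ≠ (0,0)` such that `a` is not a nonzero element
of the prime subfield `F_p`, one has `N(a,b) = p^{2m-2} - 1`. -/
theorem stmt3 (p t m : ℕ) [Fact p.Prime] (ht : 2 < t) (hm : m = 2 * t)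
    (F : Type) [Field F] [Fintype F] [DecidableEq F] [Algebra (ZMod p) F]
    (hF : Fintype.card F = p ^ m)
    (N : F → F → ℕ)
    (hN : ∀ a b : F, N a b = Set.ncard {xy : F × F | xy ≠ (0, 0) ∧
      Algebra.trace (ZMod p) F (xy.1 + xy.2 ^ (p ^ t - 1)) = 0 ∧
      Algebra.trace (ZMod p) F (a * xy.1 + b * xy.2) = 0})
    (a b : F) (hab : (a, b) ≠ (0, 0))
    (ha : ¬ ∃ z : ZMod p, z ≠ 0 ∧ algebraMap (ZMod p) F z = a) :
    N a b = p ^ (2 * m - 2) - 1 :=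
  stmt3_general p t m ht hm F hF N hN a b hab ha
end

section
/- For every nonzero element a of the prime subfield F_p ⊆ F_q, one has N(a,0) = p^{2m−2} − 1 + p^{m−2}(p−1) + p^{m−2}(p^t − 1)·S. -/
/-!
For `a ∈ 𝔽_p^*` we have `Tr (a x) = a Tr x`, so the pairs counted by `N(a,0)` are the nonzero
`(x, y)` with `Tr x = 0` and `Tr (y ^ (p^t - 1)) = 0`: `N(a,0) = p^(m-1) · #B - 1` where
`B = {y | Tr (y ^ (p^t - 1)) = 0}`. Since `q - 1 = (p^t - 1)(p^t + 1)` and `𝔽_q^*` is cyclic,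
`y ↦ y ^ (p^t - 1)` maps `𝔽_q^*` onto `Δ` with fibres of size `p^t - 1`, whence
`#B = 1 + (p^t - 1) · #{u ∈ Δ | Tr u = 0}`; and by orthogonality of the additive characters
of `𝔽_p`, `p · #{u ∈ Δ | Tr u = 0} = S + #Δ = S + p^t + 1`.
-/

open Finset

theorem AddMonoidHom.card_filter_eq_zero_mul_card_of_surjective {G H : Type*} [AddGroup G]
    [Fintype G] [AddGroup H] [Fintype H] [DecidableEq H] (f : G →+ H)
    (hf : Function.Surjective f) :
    #{g | f g = 0} * Fintype.card H = Fintype.card G := by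
  rw [← card_univ (α := G),
    card_eq_sum_card_fiberwise (f := f) (s := univ) (t := univ) fun _ _ ↦ mem_univ _,
    sum_congr rfl fun h _ ↦ AddMonoidHom.card_fiber_eq_of_mem_range f (hf h) (hf 0), sum_const,
    card_univ, smul_eq_mul, mul_comm]

namespace IsCyclic

variable {G : Type*} [CommGroup G] [Fintype G] [IsCyclic G]

theorem exists_pow_eq_of_pow_eq_one {d n : ℕ} (hG : Fintype.card G = d * n) (hn : 0 < n)
    {u : G} (hu : u ^ n = 1) : ∃ g : G, g ^ d = u := by
  obtain ⟨g, hg⟩ := IsCyclic.exists_generator (α := G)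
  obtain ⟨j, rfl⟩ := mem_powers_iff_mem_zpowers.2 (hg u)
  have hdj : d * n ∣ j * n := by
    rw [← hG, ← Nat.card_eq_fintype_card, ← orderOf_eq_card_of_forall_mem_zpowers hg]
    exact orderOf_dvd_of_pow_eq_one (by rwa [pow_mul])
  obtain ⟨i, rfl⟩ := (Nat.mul_dvd_mul_iff_right hn).1 hdj
  exact ⟨g ^ i, by rw [← pow_mul, mul_comm]⟩

variable [DecidableEq G]

theorem card_filter_pow_eq_one (k : ℕ) : #{g : G | g ^ k = 1} = (Fintype.card G).gcd k := by
  rw [← Nat.card_eq_fintype_card, ← card_powMonoidHom_ker, Nat.card_eq_fintype_card,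
    Fintype.card_subtype]
  simp only [MonoidHom.mem_ker, powMonoidHom_apply]

theorem card_filter_pow_eq {d n : ℕ} (hG : Fintype.card G = d * n) (hn : 0 < n) {u : G}
    (hu : u ^ n = 1) : #{g : G | g ^ d = u} = d := by
  obtain ⟨g, rfl⟩ := exists_pow_eq_of_pow_eq_one hG hn hu
  have hfiber := MonoidHom.card_fiber_eq_of_mem_range (powMonoidHom d : G →* G) ⟨g, rfl⟩
    ⟨1, one_pow d⟩
  simp only [powMonoidHom_apply] at hfiber
  rw [hfiber, card_filter_pow_eq_one, hG, Nat.gcd_mul_right_left]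

theorem card_filter_pow {d n : ℕ} (hG : Fintype.card G = d * n) (hn : 0 < n) (P : G → Prop)
    [DecidablePred P] : #{g : G | P (g ^ d)} = d * #{u : G | u ^ n = 1 ∧ P u} := by
  have hmaps : Set.MapsTo (· ^ d) (({g : G | P (g ^ d)} : Finset G) : Set G)
      ({u : G | u ^ n = 1 ∧ P u} : Finset G) := by
    intro g hg
    simp only [coe_filter, mem_univ, true_and, Set.mem_ofPred_eq] at hg ⊢
    exact ⟨by rw [← pow_mul, ← hG, pow_card_eq_one], hg⟩
  rw [card_eq_sum_card_fiberwise hmaps, mul_comm, ← smul_eq_mul, ← sum_const]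
  refine sum_congr rfl fun u hu ↦ ?_
  rw [mem_filter] at hu
  rw [filter_filter]
  refine (congrArg card (filter_congr fun g _ ↦ ?_)).trans (card_filter_pow_eq hG hn hu.2.1)
  exact ⟨And.right, fun h ↦ ⟨h ▸ hu.2.2, h⟩⟩

end IsCyclic

namespace FiniteField

variable {F : Type*} [Field F] [Fintype F] [DecidableEq F]

theorem card_filter_units (P : F → Prop) [DecidablePred P] :
    #{u : Fˣ | P u} = #{x : F | x ≠ 0 ∧ P x} := by
  refine card_bij (fun u _ ↦ (u : F)) (fun u hu ↦ ?_) (fun _ _ _ _ h ↦ Units.val_injective h)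
    fun x hx ↦ ?_
  · simp only [mem_filter, mem_univ, true_and] at hu ⊢
    exact ⟨u.ne_zero, hu⟩
  · simp only [mem_filter, mem_univ, true_and] at hx
    exact ⟨Units.mk0 x hx.1, by simpa using hx.2, rfl⟩

theorem card_filter_pow {d n : ℕ} (hF : Fintype.card F - 1 = d * n) (hn : 0 < n)
    (P : F → Prop) [DecidablePred P] :
    #{y : F | y ≠ 0 ∧ P (y ^ d)} = d * #{x : F | x ^ n = 1 ∧ P x} := by
  have hG : Fintype.card Fˣ = d * n := by rw [Fintype.card_units, hF]
  have hroots : #{x : F | x ^ n = 1 ∧ P x} = #{x : F | x ≠ 0 ∧ (x ^ n = 1 ∧ P x)} := by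
    congr 1
    exact filter_congr fun _ _ ↦
      ⟨fun h ↦ ⟨(IsUnit.of_pow_eq_one h.1 hn.ne').ne_zero, h⟩, And.right⟩
  rw [hroots, ← card_filter_units, ← card_filter_units]
  simpa only [Units.val_pow_eq_pow_val, Units.ext_iff, Units.val_one] using
    IsCyclic.card_filter_pow hG hn fun u : Fˣ ↦ P u

theorem card_filter_pow_eq_one {d n : ℕ} (hF : Fintype.card F - 1 = d * n) (hd : 0 < d)
    (hn : 0 < n) : #{x : F | x ^ n = 1} = n := by
  have h := card_filter_pow hF hn fun _ ↦ True
  simp only [and_true, filter_ne', card_erase_of_mem (mem_univ _), card_univ, hF] at h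
  exact (Nat.eq_of_mul_eq_mul_left hd h).symm

theorem card_filter_pow_of_zero {d n : ℕ} (hF : Fintype.card F - 1 = d * n) (hd : 0 < d)
    (hn : 0 < n) (P : F → Prop) [DecidablePred P] (hP : P 0) :
    #{y : F | P (y ^ d)} = 1 + d * #{x : F | x ^ n = 1 ∧ P x} := by
  have hsplit : univ.filter (fun y : F ↦ P (y ^ d))
      = insert 0 (univ.filter fun y : F ↦ y ≠ 0 ∧ P (y ^ d)) := by
    ext y
    by_cases hy : y = 0 <;> simp [hy, zero_pow hd.ne', hP]
  rw [hsplit, card_insert_of_notMem (by simp), card_filter_pow hF hn, add_comm]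

end FiniteField

section Trace

variable {p : ℕ} [Fact p.Prime] {F : Type*} [Field F] [Algebra (ZMod p) F]

local notation "Tr" => Algebra.trace (ZMod p) F

theorem sum_algebraMap_mul_eq_ite {R : Type*} [CommRing R] [IsDomain R] {ζ : R}
    (hζ : IsPrimitiveRoot ζ p) {χ : F → R} (hχ : ∀ x, χ x = ζ ^ (Tr x).val) (u : F) :
    ∑ z : ZMod p, χ (algebraMap (ZMod p) F z * u) = if Tr u = 0 then (p : R) else 0 := by
  simp only [hχ, ← Algebra.smul_def, map_smul, smul_eq_mul]
  simpa [AddChar.zmodChar_apply, ZMod.card] using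
    AddChar.sum_mulShift (Tr u) (AddChar.zmodChar_primitive_of_primitive_root p hζ)

theorem sum_compl_zero_sum_char_add_card {R : Type*} [CommRing R] [IsDomain R] {ζ : R}
    (hζ : IsPrimitiveRoot ζ p) {χ : F → R} (hχ : ∀ x, χ x = ζ ^ (Tr x).val) (Δ : Finset F) :
    ∑ z ∈ ({0}ᶜ : Finset (ZMod p)), ∑ x ∈ Δ, χ (algebraMap (ZMod p) F z * x) + #Δ
      = p * #{u ∈ Δ | Tr u = 0} := by
  have hzero : ∑ x ∈ Δ, χ (algebraMap (ZMod p) F 0 * x) = #Δ := by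
    simp [hχ]
  rw [← hzero, add_comm,
    ← Fintype.sum_eq_add_sum_compl 0 fun z ↦ ∑ x ∈ Δ, χ (algebraMap (ZMod p) F z * x), sum_comm,
    sum_congr rfl fun u _ ↦ sum_algebraMap_mul_eq_ite hζ hχ u, sum_ite, sum_const_zero, add_zero,
    sum_const, nsmul_eq_mul, mul_comm]

variable [Fintype F]

theorem card_filter_trace_eq_zero_mul : #{x : F | Tr x = 0} * p = Fintype.card F := by
  have h := (Tr).toAddMonoidHom.card_filter_eq_zero_mul_card_of_surjective
    (Algebra.trace_surjective (ZMod p) F)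
  rwa [ZMod.card] at h

variable [DecidableEq F]

theorem ncard_trace_pair_eq_card_mul_card_sub_one {k : ℕ} (hk : k ≠ 0) {z : ZMod p}
    (hz : z ≠ 0) :
    Set.ncard {xy : F × F | xy ≠ (0, 0) ∧ Tr (xy.1 + xy.2 ^ k) = 0 ∧
        Tr (algebraMap (ZMod p) F z * xy.1 + 0 * xy.2) = 0}
      = #{x : F | Tr x = 0} * #{y : F | Tr (y ^ k) = 0} - 1 := by
  have hset : {xy : F × F | xy ≠ (0, 0) ∧ Tr (xy.1 + xy.2 ^ k) = 0 ∧
      Tr (algebraMap (ZMod p) F z * xy.1 + 0 * xy.2) = 0}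
      = ↑((({x : F | Tr x = 0} : Finset F) ×ˢ ({y : F | Tr (y ^ k) = 0} : Finset F)).erase
        (0, 0)) := by
    ext ⟨x, y⟩
    simp only [zero_mul, add_zero, ← Algebra.smul_def, map_smul, smul_eq_mul, mul_eq_zero, hz,
      false_or, map_add, coe_erase, coe_product, coe_filter, mem_univ, true_and]
    simp only [Set.mem_ofPred_eq, Set.mem_sdiff, Set.mem_prod, Set.mem_singleton_iff]
    constructor
    · rintro ⟨hne, hsum, hx⟩
      exact ⟨⟨hx, by rwa [hx, zero_add] at hsum⟩, hne⟩
    · rintro ⟨⟨hx, hy⟩, hne⟩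
      exact ⟨hne, by rw [hx, hy, add_zero], hx⟩
  rw [hset, Set.ncard_coe_finset, card_erase_of_mem (by simp [zero_pow hk]), card_product]

end Trace

/-- For every nonzero element `a` of the prime subfield `F_p ⊆ F_q`,
`N(a,0) = p^{2m-2} - 1 + p^{m-2}(p-1) + p^{m-2}(p^t - 1)·S`. -/
theorem stmt4 (p t m : ℕ) [Fact p.Prime] (ht : 2 < t) (hm : m = 2 * t)
    (F : Type) [Field F] [Fintype F] [DecidableEq F] [Algebra (ZMod p) F]
    (hF : Fintype.card F = p ^ m)
    (ζ : ℂ) (hζ : ζ = Complex.exp (2 * Real.pi * Complex.I / p))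
    (χ : F → ℂ) (hχ : ∀ x, χ x = ζ ^ (Algebra.trace (ZMod p) F x).val)
    (Δ : Finset F) (hΔ : Δ = univ.filter (fun x : F => x ^ (p ^ t + 1) = 1))
    (S : ℂ) (hS : S = ∑ z ∈ ({0}ᶜ : Finset (ZMod p)), ∑ x ∈ Δ, χ (algebraMap (ZMod p) F z * x))
    (N : F → F → ℕ)
    (hN : ∀ a b : F, N a b = Set.ncard {xy : F × F | xy ≠ (0, 0) ∧
      Algebra.trace (ZMod p) F (xy.1 + xy.2 ^ (p ^ t - 1)) = 0 ∧
      Algebra.trace (ZMod p) F (a * xy.1 + b * xy.2) = 0})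
    (z : ZMod p) (hz : z ≠ 0) :
    (N (algebraMap (ZMod p) F z) 0 : ℂ) =
      (p : ℂ) ^ (2 * m - 2) - 1 + (p : ℂ) ^ (m - 2) * (p - 1)
        + (p : ℂ) ^ (m - 2) * ((p : ℂ) ^ t - 1) * S := by
  have hp : 1 < p := (Fact.out : p.Prime).one_lt
  have hpt : 1 < p ^ t := Nat.one_lt_pow (by omega) hp
  have hq : Fintype.card F - 1 = (p ^ t - 1) * (p ^ t + 1) := by
    rw [hF, hm, pow_mul', ← Nat.one_pow 2, Nat.sq_sub_sq, Nat.one_pow, mul_comm]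
  have hA : #{x : F | Algebra.trace (ZMod p) F x = 0} = p ^ (m - 1) := by
    refine Nat.eq_of_mul_eq_mul_right (by omega : 0 < p) ?_
    rw [card_filter_trace_eq_zero_mul, hF, ← pow_succ, Nat.sub_add_cancel (by omega)]
  have hB : #{y : F | Algebra.trace (ZMod p) F (y ^ (p ^ t - 1)) = 0}
      = 1 + (p ^ t - 1) * #{u ∈ Δ | Algebra.trace (ZMod p) F u = 0} := by
    rw [FiniteField.card_filter_pow_of_zero hq (by omega) (by omega)
      (fun x ↦ Algebra.trace (ZMod p) F x = 0) (map_zero _), hΔ, filter_filter]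
  have hΔcard : #Δ = p ^ t + 1 := hΔ ▸ FiniteField.card_filter_pow_eq_one hq (by omega) (by omega)
  have hT : S + ((p : ℂ) ^ t + 1) = p * #{u ∈ Δ | Algebra.trace (ZMod p) F u = 0} := by
    have hζp : IsPrimitiveRoot ζ p := hζ ▸ Complex.isPrimitiveRoot_exp p (by omega)
    rw [hS, ← sum_compl_zero_sum_char_add_card hζp hχ Δ, hΔcard]
    push_cast
    rfl
  rw [hN, ncard_trace_pair_eq_card_mul_card_sub_one (by omega) hz, hA, hB,
    Nat.cast_sub (Nat.one_le_iff_ne_zero.2 (by positivity))]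
  push_cast [Nat.cast_sub hpt.le]
  rw [show 2 * m - 2 = (m - 2) + t * 2 by omega, show m - 1 = (m - 2) + 1 by omega]
  linear_combination (-(p : ℂ) ^ (m - 2) * ((p : ℂ) ^ t - 1)) * hT
end

section
/- For every (a,b) ∈ (F_q × F_q) \ {(0,0)} there exists (x,y) ∈ D with Tr(ax + by) ≠ 0. Consequently, the F_p-linear map sending (a,b) ∈ F_q × F_q to the word (Tr(ax + by))_{(x,y) ∈ D} is injective, i.e., the linear code C_D = {(Tr(ax+by))_{(x,y)∈D} : a, b ∈ F_q} has dimension 2m over F_p. -/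
/-!
Write `q = n ^ 2` with `n = p ^ t`. Taking `x = -y ^ (n - 1)` in the vanishing hypothesis gives
`Tr(b y) = Tr(a y ^ (n - 1))` for all `y`. Replacing `y` by `u y` with `u ≠ 1`, `u ^ (n - 1) = 1`
yields `Tr(b (u - 1) y) = 0` for all `y`, so `b = 0` by nondegeneracy of the trace form.
Then `Tr(a z) = 0` for every `(n - 1)`-th power `z`. These powers form a monoid, so their
`F_p`-span is the subfield they generate; it contains an element of order `n + 1`, which no proper
subfield (of size at most `n`) can contain. Hence the span is everything and `a = 0`.
-/

open Finset Module Submodule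

section FiniteField

variable {F : Type*} [Field F] [Finite F] {n : ℕ}

theorem FiniteField.exists_orderOf_eq_of_natCard_eq_sq (hF : Nat.card F = n ^ 2) :
    ∃ g : F, orderOf g = (n - 1) * (n + 1) := by
  obtain ⟨g, hg⟩ := IsCyclic.exists_generator (α := Fˣ)
  refine ⟨g, ?_⟩
  rw [orderOf_units, orderOf_eq_card_of_forall_mem_zpowers hg, Nat.card_units, hF,
    ← one_pow 2, Nat.sq_sub_sq, one_pow, mul_comm]

theorem IntermediateField.eq_top_of_orderOf_eq {k : Type*} [Field k] [Algebra k F]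
    (hF : Nat.card F = n ^ 2) {K : IntermediateField k F} {z : F} (hzK : z ∈ K)
    (hz : orderOf z = n + 1) : K = ⊤ := by
  by_contra hK
  have : Fintype K := Fintype.ofFinite K
  have hrank : 2 ≤ finrank K F := by
    have := Module.finrank_pos (R := K) (M := F)
    have := mt IntermediateField.finrank_eq_one_iff_eq_top.1 hK
    omega
  have hKn : Nat.card K ≤ n := by
    refine (Nat.pow_le_pow_iff_left two_ne_zero).1 ?_
    calc Nat.card K ^ 2 ≤ Nat.card K ^ finrank K F :=
          Nat.pow_le_pow_right Nat.card_pos hrank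
      _ = n ^ 2 := by rw [← Module.natCard_eq_pow_finrank, hF]
  have hz0 : (⟨z, hzK⟩ : K) ≠ 0 := fun h0 => by
    simp [show z = 0 from congrArg Subtype.val h0] at hz
  have hord : orderOf (⟨z, hzK⟩ : K) ≤ Fintype.card K - 1 :=
    orderOf_le_of_pow_eq_one (by have := Fintype.one_lt_card (α := K); omega)
      (FiniteField.pow_card_sub_one_eq_one _ hz0)
  rw [← orderOf_injective (K.val : K →* F) Subtype.val_injective,
    ← Nat.card_eq_fintype_card] at hord
  change orderOf z ≤ _ at hord
  omega

theorem span_range_pow_sub_one_eq_top (k : Type*) [Field k] [Algebra k F]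
    (hF : Nat.card F = n ^ 2) : span k (Set.range fun y : F => y ^ (n - 1)) = ⊤ := by
  obtain ⟨g, hg⟩ := FiniteField.exists_orderOf_eq_of_natCard_eq_sq hF
  have hn : n - 1 ≠ 0 := by
    have := Finite.one_lt_card (α := F)
    rw [hF] at this
    have : 1 < n := (Nat.one_lt_pow_iff two_ne_zero).1 this
    omega
  let M : Submonoid F := MonoidHom.mrange (powMonoidHom (n - 1) : F →* F)
  have hadjoin : IntermediateField.adjoin k (M : Set F) = ⊤ :=
    IntermediateField.eq_top_of_orderOf_eq hF
      (IntermediateField.subset_adjoin k _ (MonoidHom.mem_mrange.2 ⟨g, rfl⟩))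
      (by rw [powMonoidHom_apply, orderOf_pow_of_dvd hn (hg ▸ dvd_mul_right _ _), hg,
        Nat.mul_div_cancel_left _ (Nat.pos_of_ne_zero hn)])
  rw [IntermediateField.adjoin_eq_top_iff_of_isAlgebraic
    (fun x _ => Algebra.IsAlgebraic.isAlgebraic x)] at hadjoin
  have := Algebra.adjoin_eq_span k (M : Set F)
  rw [hadjoin, Submonoid.closure_eq, Algebra.top_toSubmodule, MonoidHom.coe_mrange] at this
  exact this.symm

end FiniteField

theorem eq_zero_of_forall_mem_trace_mul_eq_zero {k F : Type*} [Field k] [Field F] [Algebra k F]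
    [FiniteDimensional k F] [Algebra.IsSeparable k F] {S : Set F} (hS : span k S = ⊤) {a : F}
    (h : ∀ z ∈ S, Algebra.trace k F (a * z) = 0) : a = 0 := by
  have hker : ⊤ ≤ LinearMap.ker (Algebra.traceForm k F a) := hS ▸ span_le.2 h
  exact (traceForm_nondegenerate k F).1 a fun w => hker (mem_top (x := w))

theorem FiniteField.eq_zero_of_trace_mul_add_mul_eq_zero {k F : Type*} [Field k] [Field F]
    [Finite F] [Algebra k F] [Algebra.IsSeparable k F] {n : ℕ} (hn : 3 ≤ n)
    (hF : Nat.card F = n ^ 2) {a b : F}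
    (h : ∀ x y : F, Algebra.trace k F (x + y ^ (n - 1)) = 0 →
      Algebra.trace k F (a * x + b * y) = 0) : a = 0 ∧ b = 0 := by
  have hby : ∀ y, Algebra.trace k F (b * y) = Algebra.trace k F (a * y ^ (n - 1)) := fun y => by
    have := h (-y ^ (n - 1)) y (by rw [neg_add_cancel, map_zero])
    rw [mul_neg, map_add, map_neg, neg_add_eq_zero] at this
    exact this.symm
  obtain ⟨g, hg⟩ := FiniteField.exists_orderOf_eq_of_natCard_eq_sq hF
  have hu : orderOf (g ^ (n + 1)) = n - 1 := by
    rw [orderOf_pow_of_dvd (by omega) (hg ▸ dvd_mul_left _ _), hg,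
      Nat.mul_div_cancel _ (by omega)]
  have hb : b = 0 := by
    have hbu : b * (g ^ (n + 1) - 1) = 0 := by
      refine eq_zero_of_forall_mem_trace_mul_eq_zero (span_univ (R := k)) fun y _ => ?_
      rw [mul_assoc, sub_mul, one_mul, mul_sub, map_sub, hby, hby, mul_pow, ← hu,
        pow_orderOf_eq_one, one_mul, sub_self]
    refine (mul_eq_zero.1 hbu).resolve_right (sub_ne_zero.2 fun h1 => ?_)
    rw [h1, orderOf_one] at hu
    omega
  refine ⟨eq_zero_of_forall_mem_trace_mul_eq_zero (span_range_pow_sub_one_eq_top k hF) ?_, hb⟩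
  rintro _ ⟨y, rfl⟩
  rw [← hby, hb, zero_mul, map_zero]

/-- For every `(a,b) ≠ (0,0)` there exists `(x,y) ∈ D` with
`Tr(ax+by) ≠ 0`; consequently the `F_p`-linear map `(a,b) ↦ (Tr(ax+by))_{(x,y)∈D}`
is injective, i.e. the code `C_D` has dimension `2m` over `F_p`. -/
theorem stmt8 (p t m : ℕ) [Fact p.Prime] (ht : 2 < t) (hm : m = 2 * t)
    (F : Type) [Field F] [Fintype F] [DecidableEq F] [Algebra (ZMod p) F]
    (hF : Fintype.card F = p ^ m)
    (D : Finset (F × F))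
    (hD : D = univ.filter (fun xy : F × F => xy ≠ (0, 0) ∧
      Algebra.trace (ZMod p) F (xy.1 + xy.2 ^ (p ^ t - 1)) = 0)) :
    (∀ a b : F, (a, b) ≠ (0, 0) →
        ∃ xy ∈ D, Algebra.trace (ZMod p) F (a * xy.1 + b * xy.2) ≠ 0) ∧
      Function.Injective (fun ab : F × F => fun xy : ↥D =>
        Algebra.trace (ZMod p) F (ab.1 * (xy : F × F).1 + ab.2 * (xy : F × F).2)) := by
  have hn : 3 ≤ p ^ t := calc
    3 ≤ 2 ^ t := le_trans (by norm_num) (Nat.pow_le_pow_right two_pos ht)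
    _ ≤ p ^ t := Nat.pow_le_pow_left (Fact.out : p.Prime).two_le t
  have hF' : Nat.card F = (p ^ t) ^ 2 := by
    rw [Nat.card_eq_fintype_card, hF, hm, ← pow_mul, mul_comm]
  have hD_nonzero : ∀ a b : F, (a, b) ≠ (0, 0) →
      ∃ xy ∈ D, Algebra.trace (ZMod p) F (a * xy.1 + b * xy.2) ≠ 0 := by
    intro a b hab
    by_contra! hvanish
    refine hab (Prod.ext_iff.2
      (FiniteField.eq_zero_of_trace_mul_add_mul_eq_zero (k := ZMod p) hn hF' ?_))
    intro x y hxy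
    by_cases hxy0 : (x, y) = (0, 0)
    · obtain ⟨rfl, rfl⟩ := Prod.mk.inj hxy0
      simp
    · refine hvanish (x, y) ?_
      simp only [hD, mem_filter, mem_univ, true_and]
      exact ⟨hxy0, hxy⟩
  refine ⟨hD_nonzero, fun ab ab' heq => ?_⟩
  by_contra hne
  obtain ⟨xy, hxyD, htr⟩ := hD_nonzero (ab.1 - ab'.1) (ab.2 - ab'.2)
    (by rwa [Ne, Prod.ext_iff, sub_eq_zero, sub_eq_zero, ← Prod.ext_iff])
  refine htr ?_
  rw [sub_mul, sub_mul, sub_add_sub_comm, map_sub]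
  exact sub_eq_zero.2 (congrFun heq ⟨xy, hxyD⟩)
end

section
/- Every nonzero codeword of the dual code C_D^⊥ has Hamming weight at least 2, and C_D^⊥ contains a nonzero codeword of Hamming weight at most 4. Equivalently, the minimum distance d⊥ of C_D^⊥ satisfies 2 ≤ d⊥ ≤ 4. -/
/-!
By nondegeneracy of the trace form, a word `f : D → 𝔽_p` lies in `C_D^⊥` exactly when
`∑ f(z) • z = 0` in `F_q × F_q`, i.e. when it records an `𝔽_p`-linear relation among the points
of `D`. A relation supported on one point forces that point to be `0 ∉ D`. Conversely the kernel
of the trace has dimension `m - 1 ≥ 2`; for independent `x, y` in it the points `(x, 0)`, `(y, 0)`,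
`(x + y, 0)` lie in `D` and carry the relation of weight 3.
-/

open Finset

section

variable {K L : Type*} [Field K] [Field L] [Algebra K L]

theorem sum_mul_trace_eq_trace_sum_smul {ι : Type*} [Fintype ι] (c : ι → K) (z : ι → L × L)
    (a b : L) :
    ∑ i, c i * Algebra.trace K L (a * (z i).1 + b * (z i).2) =
      Algebra.trace K L (a * (∑ i, c i • z i).1 + b * (∑ i, c i • z i).2) := by
  simp only [Prod.fst_sum, Prod.snd_sum, Prod.smul_fst, Prod.smul_snd, Finset.mul_sum,
    mul_smul_comm, ← Finset.sum_add_distrib, ← smul_add, map_sum, map_smul, smul_eq_mul]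

variable [FiniteDimensional K L] [Algebra.IsSeparable K L]

theorem eq_zero_of_forall_trace_mul_eq_zero {x : L} (h : ∀ a, Algebra.trace K L (a * x) = 0) :
    x = 0 :=
  (traceForm_nondegenerate K L).2 x fun a => by simpa [mul_comm] using h a

theorem forall_sum_mul_trace_eq_zero_iff {ι : Type*} [Fintype ι] (c : ι → K) (z : ι → L × L) :
    (∀ a b : L, ∑ i, c i * Algebra.trace K L (a * (z i).1 + b * (z i).2) = 0) ↔
      ∑ i, c i • z i = 0 := by
  simp only [sum_mul_trace_eq_trace_sum_smul]
  refine ⟨fun h => Prod.ext ?_ ?_, fun h a b => by simp [h]⟩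
  · exact eq_zero_of_forall_trace_mul_eq_zero (K := K) fun a => by simpa using h a 0
  · exact eq_zero_of_forall_trace_mul_eq_zero (K := K) fun b => by simpa using h 0 b

end

theorem two_le_card_support_of_sum_smul_eq_zero {K V ι : Type*} [DivisionRing K] [AddCommGroup V]
    [Module K V] [Fintype ι] [DecidableEq K] {f : ι → K} {z : ι → V} (hz : ∀ i, z i ≠ 0)
    (hsum : ∑ i, f i • z i = 0) (hf : f ≠ 0) : 2 ≤ #{i | f i ≠ 0} := by
  obtain ⟨i, hi⟩ := Function.ne_iff.mp hf
  by_contra! hlt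
  have hsupp : ∀ j, f j ≠ 0 → j = i := fun j hj =>
    card_le_one.mp (Nat.lt_succ_iff.mp hlt) j (by simpa) i (by simpa)
  rw [Fintype.sum_eq_single i fun j hj => by
    by_contra h; exact hj (hsupp j (left_ne_zero_of_smul h))] at hsum
  exact hz i ((smul_eq_zero.mp hsum).resolve_left hi)

theorem LinearMap.exists_linearIndependent_pair_mem_ker {K V : Type*} [Field K] [AddCommGroup V]
    [Module K V] [FiniteDimensional K V] (φ : V →ₗ[K] K) (hV : 3 ≤ Module.finrank K V) :
    ∃ x y, φ x = 0 ∧ φ y = 0 ∧ LinearIndependent K ![x, y] := by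
  have hker : 1 < Module.finrank K (LinearMap.ker φ) := by
    have hsum := φ.finrank_range_add_finrank_ker
    have hrange := (LinearMap.range φ).finrank_le
    rw [Module.finrank_self] at hrange
    omega
  have : Nontrivial (LinearMap.ker φ) := Module.nontrivial_of_finrank_pos (R := K) (by omega)
  obtain ⟨x, hx⟩ := exists_ne (0 : LinearMap.ker φ)
  obtain ⟨y, hxy⟩ := exists_linearIndependent_pair_of_one_lt_finrank hker hx
  refine ⟨x, y, x.2, y.2, ?_⟩
  have hcomp : ![(x : V), y] = (LinearMap.ker φ).subtype ∘ ![x, y] := by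
    ext i; fin_cases i <;> rfl
  rw [hcomp]
  exact hxy.map' _ (LinearMap.ker φ).ker_subtype

theorem exists_sum_smul_eq_zero_of_linearIndependent_pair {K V : Type*} [Field K] [AddCommGroup V]
    [Module K V] [DecidableEq K] {D : Finset V} {u v : V} (huv : LinearIndependent K ![u, v])
    (hu : u ∈ D) (hv : v ∈ D) (huv' : u + v ∈ D) :
    ∃ f : D → K, ∑ z, f z • (z : V) = 0 ∧ f ≠ 0 ∧ #{z | f z ≠ 0} ≤ 3 := by
  classical
  set c : V →₀ K := .single u 1 + .single v 1 - .single (u + v) 1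
  have hvanish : ∀ w, c w ≠ 0 → w ∈ ({u, v, u + v} : Finset V) := by
    intro w hw
    by_contra h
    simp only [mem_insert, mem_singleton, not_or] at h
    simp [c, Ne.symm h.1, Ne.symm h.2.1, Ne.symm h.2.2] at hw
  have hsupp : c.support ⊆ D := fun w hw => by
    have hw' := hvanish w (Finsupp.mem_support_iff.mp hw)
    simp only [mem_insert, mem_singleton] at hw'
    rcases hw' with rfl | rfl | rfl <;> assumption
  have hvu : v ≠ u := fun h => by
    simpa using LinearIndependent.pair_iff.mp huv 1 (-1) (by simp [h])
  have hv0 : v ≠ 0 := huv.ne_zero 1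
  refine ⟨fun z => c z, ?_, ?_, ?_⟩
  · calc ∑ z : D, c z • (z : V) = Finsupp.linearCombination K id c :=
          (sum_coe_sort D fun w => c w • w).trans
            (Finsupp.linearCombination_apply_of_mem_supported K
              ((Finsupp.mem_supported K c).mpr (by exact_mod_cast hsupp))).symm
      _ = 0 := by simp [c]
  · refine Function.ne_iff.mpr ⟨⟨u, hu⟩, ?_⟩
    simp [c, hvu, hv0]
  · calc #{z : D | c z ≠ 0} ≤ #({u, v, u + v} : Finset V) :=
          card_le_card_of_injOn Subtype.val (fun z hz => hvanish z (mem_filter.mp hz).2)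
            Subtype.val_injective.injOn
      _ ≤ 3 := card_le_three

/-- Every nonzero codeword of the dual code `C_D^⊥` has Hamming weight
at least 2, and `C_D^⊥` contains a nonzero codeword of Hamming weight at most 4;
i.e. the minimum distance `d⊥` of `C_D^⊥` satisfies `2 ≤ d⊥ ≤ 4`. -/
theorem stmt9 (p t m : ℕ) [Fact p.Prime] (ht : 2 < t) (hm : m = 2 * t)
    (F : Type) [Field F] [Fintype F] [DecidableEq F] [Algebra (ZMod p) F]
    (hF : Fintype.card F = p ^ m)
    (D : Finset (F × F))
    (hD : D = univ.filter (fun xy : F × F => xy ≠ (0, 0) ∧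
      Algebra.trace (ZMod p) F (xy.1 + xy.2 ^ (p ^ t - 1)) = 0))
    (dual : (↥D → ZMod p) → Prop)
    (hdual : ∀ f, dual f ↔ ∀ a b : F,
      ∑ xy : ↥D, f xy * Algebra.trace (ZMod p) F (a * (xy : F × F).1 + b * (xy : F × F).2) = 0)
    (wt : (↥D → ZMod p) → ℕ)
    (hwt : ∀ f, wt f = (univ.filter (fun xy : ↥D => f xy ≠ 0)).card) :
    (∀ f : ↥D → ZMod p, dual f → f ≠ 0 → 2 ≤ wt f) ∧
      (∃ f : ↥D → ZMod p, dual f ∧ f ≠ 0 ∧ wt f ≤ 4) := by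
  have hp : p.Prime := Fact.out
  have : Module.Finite (ZMod p) F := Module.finite_iff_finite.mpr inferInstance
  have hdim : Module.finrank (ZMod p) F = m := by
    rw [Module.card_eq_pow_finrank (K := ZMod p), ZMod.card] at hF
    exact Nat.pow_right_injective hp.two_le hF
  have hmem : ∀ w : F, w ≠ 0 → Algebra.trace (ZMod p) F w = 0 → ((w, 0) : F × F) ∈ D := by
    intro w hw htr
    have hexp : p ^ t - 1 ≠ 0 := by
      have := Nat.one_lt_pow (by omega : t ≠ 0) hp.one_lt
      omega
    simp [hD, hw, htr, zero_pow hexp]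
  have hD0 : ∀ z ∈ D, z ≠ 0 := fun z hz => by
    rw [hD, mem_filter] at hz
    exact hz.2.1
  refine ⟨fun f hf hf0 => ?_, ?_⟩
  · rw [hdual, forall_sum_mul_trace_eq_zero_iff] at hf
    rw [hwt]
    exact two_le_card_support_of_sum_smul_eq_zero (fun z => hD0 z z.2) hf hf0
  · obtain ⟨x, y, hx, hy, hxy⟩ :=
      (Algebra.trace (ZMod p) F).exists_linearIndependent_pair_mem_ker (by omega)
    have hxy0 : x + y ≠ 0 := fun h => by
      simpa using LinearIndependent.pair_iff.mp hxy 1 1 (by simpa using h)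
    have huv : LinearIndependent (ZMod p) ![((x, 0) : F × F), (y, 0)] :=
      LinearIndependent.pair_iff.mpr fun s t h =>
        LinearIndependent.pair_iff.mp hxy s t (by simpa using congrArg Prod.fst h)
    obtain ⟨f, hf, hf0, hwt3⟩ := exists_sum_smul_eq_zero_of_linearIndependent_pair huv
      (hmem x (hxy.ne_zero 0) hx) (hmem y (hxy.ne_zero 1) hy)
      (by simpa using hmem (x + y) hxy0 (by rw [map_add, hx, hy, add_zero]))
    exact ⟨f, (hdual f).mpr ((forall_sum_mul_trace_eq_zero_iff _ _).mpr hf), hf0,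
      by rw [hwt]; omega⟩
end

section
/- The number of pairs (a,b) with a a nonzero element of the prime subfield F_p, b ∈ F_q^*, and such that the unique v ∈ Γ with Tr_{q/t}(bv) = 0 satisfies Tr(v^{p^t−1}) ≠ 0, is exactly ((p² − 2p + 1)(p^m−1) − (p^{t+1} − p^t − p + 1)·S)/p; moreover every such pair satisfies wt(a,b) = (p^{2m−2} − p^{m−2})(p−1) + p^{m−2}(p^t + S). -/
/-!
Write `n = p^t`, so `q = n²` and `E = F_{p^t}` has `n` elements. Since `α` generates `F_q^*`,
`(α^(n-1))` is a primitive `(n+1)`-th root of unity; hence `v ↦ v^(n-1)` maps `Γ` bijectively onto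
`Δ`, and `Γ` is a system of representatives of `F_q^* / E^*` (the elements of `E^*` are exactly the
nonzero `e` with `e^(n-1) = 1`). Orthogonality of additive characters of `F_p` then gives
`S = p·T - (n+1)`, where `T` is the number of `v ∈ Γ` with `Tr(v^(n-1)) = 0`.

For `b ≠ 0` the kernel of `y ↦ Tr_{q/t}(b y)` is an `E`-line, so it contains exactly one `v ∈ Γ`;
sorting the `b` by this `v` counts the pairs as `(p-1)(n-1)(n+1-T)`.

For the weight, the substitution `x ↦ x + y^(n-1)` gives
`wt(a,b) = (q/p)·#{y : Tr(b y) ≠ a·Tr(y^(n-1))}`. Writing `y = v' e` with `v' ∈ Γ`, `e ∈ E^*`, the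
condition on `e` reads `Tr_{E/F_p}(e·Tr_{q/t}(b v')) = a·Tr(v'^(n-1))`: it has no solution for
`v' = v`, and `p^(t-1) - [Tr(v'^(n-1)) = 0]` solutions for every other `v'`.
-/

open Finset

section Counting

variable {A B : Type*} [Fintype A] [DecidableEq B]

lemma AddMonoidHom.card_fiber_mul_card [Fintype B] [AddGroup A] [AddGroup B] (f : A →+ B)
    (hf : Function.Surjective f) (c : B) : #{x | f x = c} * Fintype.card B = Fintype.card A :=
  calc #{x | f x = c} * Fintype.card B = ∑ b, #{x | f x = b} := by
        rw [sum_congr rfl fun b _ => card_fiber_eq_of_mem_range f (hf b) (hf c), sum_const,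
          card_univ, smul_eq_mul, mul_comm]
    _ = Fintype.card A := (card_eq_sum_card_fiberwise fun _ _ => mem_univ _).symm

lemma card_filter_prod_of_card_fiber {C : Type*} [Fintype C] {f : A → B} {k : ℕ}
    (hk : ∀ c, #{x | f x = c} = k) (h : C → B) (R : C → Prop) [DecidablePred R] :
    #{xy : A × C | f xy.1 = h xy.2 ∧ R xy.2} = k * #{y | R y} := by
  rw [card_filter, Fintype.sum_prod_type_right, card_filter, mul_sum]
  refine sum_congr rfl fun y _ => ?_
  by_cases hy : R y
  · simp only [hy, and_true, if_true, mul_one, ← hk (h y), card_filter]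
  · simp only [hy, and_false, if_false, sum_const_zero, mul_zero]

lemma card_filter_ne_and_add_ite [Fintype B] (a : B) (P : B → Prop) [DecidablePred P] :
    #{x | x ≠ a ∧ P x} + (if P a then 1 else 0) = #{x | P x} := by
  have : ({x | x ≠ a ∧ P x} : Finset B) = ({x | P x} : Finset B).erase a := by
    ext; simp [and_comm]
  split_ifs with ha
  · rw [this, card_erase_add_one (by simpa using ha)]
  · rw [this, erase_eq_of_notMem (by simpa using ha), add_zero]

end Counting

section Trace

variable {K L : Type*} [Field K] [Field L] [Algebra K L]

lemma Algebra.trace_algebraMap_mul (z : K) (x : L) :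
    Algebra.trace K L (algebraMap K L z * x) = z * Algebra.trace K L x := by
  rw [← Algebra.smul_def, LinearMap.map_smul, smul_eq_mul]

lemma Algebra.trace_algebraMap_mul_eq_trace_mul_trace {E : Type*} [Field E] [Algebra K E]
    [Algebra E L] [IsScalarTower K E L] [Finite E] [Finite L] (e : E) (w : L) :
    Algebra.trace K L (algebraMap E L e * w) = Algebra.trace K E (e * Algebra.trace E L w) := by
  rw [← Algebra.trace_trace (S := E), Algebra.trace_algebraMap_mul]

variable [Fintype K] [Fintype L] [DecidableEq K]

lemma card_filter_trace_mul_eq_mul_card {w : L} (hw : w ≠ 0) (c : K) :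
    #{x | Algebra.trace K L (x * w) = c} * Fintype.card K = Fintype.card L := by
  refine ((Algebra.trace K L).toAddMonoidHom.comp (AddMonoidHom.mulRight w)).card_fiber_mul_card
    (fun c' => ?_) c
  obtain ⟨x, rfl⟩ := Algebra.trace_surjective K L c'
  exact ⟨x * w⁻¹, by simp [hw]⟩

lemma card_filter_trace_eq_mul_card (c : K) :
    #{x | Algebra.trace K L x = c} * Fintype.card K = Fintype.card L := by
  simpa using card_filter_trace_mul_eq_mul_card (one_ne_zero' L) c

variable {E : Type*} [Field E] [Fintype E] [Algebra K E] [Algebra E L] [IsScalarTower K E L]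

lemma card_filter_trace_algebraMap_mul_eq_mul_card {w : L} (hw : Algebra.trace E L w ≠ 0)
    (c : K) :
    #{e : E | Algebra.trace K L (algebraMap E L e * w) = c} * Fintype.card K = Fintype.card E := by
  simp only [Algebra.trace_algebraMap_mul_eq_trace_mul_trace,
    card_filter_trace_mul_eq_mul_card hw c]

end Trace

lemma exp_pow_val_eq_stdAddChar (p : ℕ) [NeZero p] (c : ZMod p) :
    Complex.exp (2 * Real.pi * Complex.I / p) ^ c.val = ZMod.stdAddChar c := by
  rw [ZMod.stdAddChar_apply, ZMod.toCircle_apply, ← Complex.exp_nat_mul]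
  ring_nf

lemma sum_compl_zero_stdAddChar_mul (p : ℕ) [Fact p.Prime] (c : ZMod p) :
    ∑ z ∈ ({0}ᶜ : Finset (ZMod p)), ZMod.stdAddChar (z * c) =
      (if c = 0 then (p : ℂ) else 0) - 1 := by
  have := sum_compl_add_sum {0} fun z : ZMod p => ZMod.stdAddChar (z * c)
  rw [sum_singleton, zero_mul, AddChar.map_zero_eq_one,
    AddChar.sum_mulShift c (ZMod.isPrimitive_stdAddChar p), ZMod.card] at this
  push_cast at this
  rw [← this, add_sub_cancel_right]

section PowersBelow

variable {R : Type*} [CommRing R] [DecidableEq R] {ω : R} {d k : ℕ}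

def powersBelow (ω : R) (k : ℕ) : Finset R := (range k).image (ω ^ ·)

lemma mem_powersBelow {v : R} : v ∈ powersBelow ω k ↔ ∃ j < k, ω ^ j = v := by
  simp [powersBelow]

lemma injOn_pow_powersBelow (h : IsPrimitiveRoot (ω ^ d) k) :
    Set.InjOn (· ^ d) (powersBelow ω k : Set R) := by
  rintro _ hv _ hw heq
  obtain ⟨i, hi, rfl⟩ := mem_powersBelow.1 hv
  obtain ⟨j, hj, rfl⟩ := mem_powersBelow.1 hw
  dsimp only at heq
  rw [pow_right_comm ω i d, pow_right_comm ω j d] at heq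
  rw [h.pow_inj hi hj heq]

lemma card_powersBelow (h : IsPrimitiveRoot (ω ^ d) k) : #(powersBelow ω k) = k := by
  refine (card_image_of_injOn fun i hi j hj heq => ?_).trans (card_range k)
  refine h.pow_inj (mem_range.1 hi) (mem_range.1 hj) ?_
  rw [← pow_right_comm, heq, pow_right_comm]

variable [IsDomain R]

lemma ne_zero_of_mem_powersBelow [NeZero k] (h : IsPrimitiveRoot (ω ^ d) k) (hd : d ≠ 0)
    {v : R} (hv : v ∈ powersBelow ω k) : v ≠ 0 := by
  obtain ⟨j, -, rfl⟩ := mem_powersBelow.1 hv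
  exact pow_ne_zero j fun h0 => h.ne_zero (NeZero.ne k) (by rw [h0, zero_pow hd])

variable [Fintype R] [NeZero k]

lemma image_pow_powersBelow (h : IsPrimitiveRoot (ω ^ d) k) :
    (powersBelow ω k).image (· ^ d) = ({x | x ^ k = 1} : Finset R) := by
  ext x
  simp only [mem_image, mem_powersBelow, mem_filter, mem_univ, true_and]
  constructor
  · rintro ⟨_, ⟨j, -, rfl⟩, rfl⟩
    rw [pow_right_comm ω j d, ← pow_mul, mul_comm, pow_mul, h.pow_eq_one, one_pow]
  · intro hx
    obtain ⟨j, hj, rfl⟩ := h.eq_pow_of_pow_eq_one hx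
    exact ⟨ω ^ j, ⟨j, hj, rfl⟩, pow_right_comm ω j d⟩

lemma card_filter_pow_powersBelow (h : IsPrimitiveRoot (ω ^ d) k) (P : R → Prop)
    [DecidablePred P] :
    #{v ∈ powersBelow ω k | P (v ^ d)} = #{x ∈ ({x | x ^ k = 1} : Finset R) | P x} := by
  rw [← image_pow_powersBelow h, filter_image,
    card_image_of_injOn ((injOn_pow_powersBelow h).mono (filter_subset _ _))]

lemma card_pow_eq_one_of_isPrimitiveRoot_pow (h : IsPrimitiveRoot (ω ^ d) k) :
    #({x | x ^ k = 1} : Finset R) = k := by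
  rw [← image_pow_powersBelow h, card_image_of_injOn (injOn_pow_powersBelow h),
    card_powersBelow h]

end PowersBelow

lemma isPrimitiveRoot_pow_sub_one_of_card_eq_sq {F : Type*} [Field F] [Fintype F] [DecidableEq F]
    {α : Fˣ} (hα : ∀ x, x ∈ Subgroup.zpowers α) {n : ℕ} (hF : Fintype.card F = n ^ 2) :
    IsPrimitiveRoot ((α : F) ^ (n - 1)) (n + 1) := by
  have hα' : IsPrimitiveRoot (α : F) (Fintype.card F - 1) := by
    rw [IsPrimitiveRoot.coe_units_iff, ← Fintype.card_units, ← Nat.card_eq_fintype_card,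
      ← orderOf_eq_card_of_forall_mem_zpowers hα]
    exact IsPrimitiveRoot.orderOf α
  refine hα'.pow (Nat.sub_pos_of_lt Fintype.one_lt_card) ?_
  rw [hF, mul_comm]
  simpa using Nat.sq_sub_sq n 1

section Subfield

variable {F : Type*} [Field F] {E : Subfield F} [Fintype E] {n : ℕ} {ω : F}

lemma one_lt_of_card_subfield_eq (hE : Fintype.card E = n) : 1 < n :=
  hE ▸ Fintype.one_lt_card

lemma mul_pow_sub_one_of_ne_zero (hE : Fintype.card E = n) {e : E} (he : e ≠ 0) (v : F) :
    (v * e) ^ (n - 1) = v ^ (n - 1) := by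
  rw [mul_pow, ← SubmonoidClass.coe_pow, ← hE, FiniteField.pow_card_sub_one_eq_one e he,
    OneMemClass.coe_one, mul_one]

variable [DecidableEq F]

lemma injOn_mul_powersBelow (hE : Fintype.card E = n) (h : IsPrimitiveRoot (ω ^ (n - 1)) (n + 1)) :
    Set.InjOn (fun ve : F × E => ve.1 * ve.2)
      ↑(powersBelow ω (n + 1) ×ˢ ({0}ᶜ : Finset E)) := by
  have hn := one_lt_of_card_subfield_eq hE
  rintro ⟨v₁, e₁⟩ h₁ ⟨v₂, e₂⟩ h₂ heq
  simp only [coe_product, Set.mem_prod, mem_coe, mem_compl, mem_singleton] at h₁ h₂ heq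
  have hv : v₁ = v₂ := injOn_pow_powersBelow h h₁.1 h₂.1 <| by
    simpa only [mul_pow_sub_one_of_ne_zero hE h₁.2, mul_pow_sub_one_of_ne_zero hE h₂.2] using
      congrArg (· ^ (n - 1)) heq
  subst hv
  simpa using mul_left_cancel₀ (ne_zero_of_mem_powersBelow h (by omega) h₁.1) heq

variable [Fintype F]

lemma image_mul_powersBelow (hE : Fintype.card E = n) (hF : Fintype.card F = n ^ 2)
    (h : IsPrimitiveRoot (ω ^ (n - 1)) (n + 1)) :
    (powersBelow ω (n + 1) ×ˢ ({0}ᶜ : Finset E)).image (fun ve : F × E => ve.1 * ve.2) =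
      ({0}ᶜ : Finset F) := by
  have hn := one_lt_of_card_subfield_eq hE
  refine eq_of_subset_of_card_le (fun y hy => ?_) ?_
  · obtain ⟨⟨v, e⟩, hve, rfl⟩ := mem_image.1 hy
    simp only [mem_product, mem_compl, mem_singleton] at hve ⊢
    exact mul_ne_zero (ne_zero_of_mem_powersBelow h (by omega) hve.1) (by simpa using hve.2)
  · rw [card_image_of_injOn (injOn_mul_powersBelow hE h), card_product, card_powersBelow h,
      card_compl, card_compl, card_singleton, card_singleton, hE, hF]
    simpa using (Nat.sq_sub_sq n 1).le

lemma card_filter_ne_zero_eq_sum_powersBelow (hE : Fintype.card E = n)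
    (hF : Fintype.card F = n ^ 2) (h : IsPrimitiveRoot (ω ^ (n - 1)) (n + 1)) (Q : F → Prop)
    [DecidablePred Q] :
    #{y | y ≠ 0 ∧ Q y} = ∑ v ∈ powersBelow ω (n + 1), #{e : E | e ≠ 0 ∧ Q (v * e)} :=
  calc #{y | y ≠ 0 ∧ Q y} = #(({0}ᶜ : Finset F).filter Q) := by
        congr 1; ext; simp
    _ = #((powersBelow ω (n + 1) ×ˢ ({0}ᶜ : Finset E)).filter fun ve => Q (ve.1 * ve.2)) := by
        rw [← image_mul_powersBelow hE hF h, filter_image,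
          card_image_of_injOn ((injOn_mul_powersBelow hE h).mono (filter_subset _ _))]
    _ = _ := by
        rw [card_filter, sum_product]
        refine sum_congr rfl fun v _ => ?_
        rw [← card_filter]
        congr 1; ext; simp

lemma card_filter_trace_mul_eq_zero (hE : Fintype.card E = n) (hF : Fintype.card F = n ^ 2)
    {w : F} (hw : w ≠ 0) : #{y | Algebra.trace E F (y * w) = 0} = n := by
  have := card_filter_trace_mul_eq_mul_card (K := E) hw 0
  rw [hE, hF, sq] at this
  exact Nat.eq_of_mul_eq_mul_right (one_lt_of_card_subfield_eq hE).le this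

lemma exists_eq_mul_of_trace_mul_eq_zero (hE : Fintype.card E = n) (hF : Fintype.card F = n ^ 2)
    {w y₁ y₂ : F} (hw : w ≠ 0) (hy₁ : y₁ ≠ 0) (h₁ : Algebra.trace E F (y₁ * w) = 0)
    (h₂ : Algebra.trace E F (y₂ * w) = 0) : ∃ e : E, y₂ = e * y₁ := by
  have hsub : (univ : Finset E).image (fun e : E => (e : F) * y₁) ⊆
      ({y | Algebra.trace E F (y * w) = 0} : Finset F) := by
    intro y hy
    obtain ⟨e, -, rfl⟩ := mem_image.1 hy
    rw [mem_filter, mul_assoc, show (e : F) = algebraMap E F e from rfl,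
      Algebra.trace_algebraMap_mul, h₁, mul_zero]
    exact ⟨mem_univ _, rfl⟩
  have heq := eq_of_subset_of_card_le hsub <| by
    rw [card_filter_trace_mul_eq_zero hE hF hw,
      card_image_of_injective _ fun _ _ he =>
        Subtype.val_injective (mul_left_injective₀ hy₁ he),
      card_univ, hE]
  have hy₂ : y₂ ∈ ({y | Algebra.trace E F (y * w) = 0} : Finset F) := by simpa using h₂
  rw [← heq] at hy₂
  obtain ⟨e, -, rfl⟩ := mem_image.1 hy₂
  exact ⟨e, rfl⟩

lemma eq_of_trace_mul_eq_zero (hE : Fintype.card E = n) (hF : Fintype.card F = n ^ 2)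
    (h : IsPrimitiveRoot (ω ^ (n - 1)) (n + 1)) {b v₁ v₂ : F} (hb : b ≠ 0)
    (hv₁ : v₁ ∈ powersBelow ω (n + 1)) (hv₂ : v₂ ∈ powersBelow ω (n + 1))
    (h₁ : Algebra.trace E F (b * v₁) = 0) (h₂ : Algebra.trace E F (b * v₂) = 0) :
    v₁ = v₂ := by
  have hn := one_lt_of_card_subfield_eq hE
  obtain ⟨e, rfl⟩ := exists_eq_mul_of_trace_mul_eq_zero hE hF hb
    (ne_zero_of_mem_powersBelow h (by omega) hv₁) (by rwa [mul_comm]) (by rwa [mul_comm])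
  have he : e ≠ 0 := by
    rintro rfl
    exact ne_zero_of_mem_powersBelow h (by omega) hv₂ (by simp)
  refine injOn_pow_powersBelow h hv₁ hv₂ ?_
  simp only [mul_comm (e : F), mul_pow_sub_one_of_ne_zero hE he]

lemma card_filter_exists_trace_mul_eq_zero (hE : Fintype.card E = n)
    (hF : Fintype.card F = n ^ 2) (h : IsPrimitiveRoot (ω ^ (n - 1)) (n + 1)) (R : F → Prop)
    [DecidablePred R] :
    #{b | b ≠ 0 ∧ ∃ v ∈ powersBelow ω (n + 1), Algebra.trace E F (b * v) = 0 ∧ R v} =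
      #{v ∈ powersBelow ω (n + 1) | R v} * (n - 1) := by
  have hn := one_lt_of_card_subfield_eq hE
  have hbiUnion : ({b | b ≠ 0 ∧ ∃ v ∈ powersBelow ω (n + 1),
      Algebra.trace E F (b * v) = 0 ∧ R v} : Finset F) = {v ∈ powersBelow ω (n + 1) | R v}.biUnion
        fun v => {b | b ≠ 0 ∧ Algebra.trace E F (b * v) = 0} := by
    ext b
    simp only [mem_filter, mem_univ, true_and, mem_biUnion]
    constructor
    · rintro ⟨hb, v, hv, hbv, hR⟩
      exact ⟨v, ⟨hv, hR⟩, hb, hbv⟩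
    · rintro ⟨v, ⟨hv, hR⟩, hb, hbv⟩
      exact ⟨hb, v, hv, hbv, hR⟩
  rw [hbiUnion, card_biUnion, ← smul_eq_mul, ← sum_const]
  · refine sum_congr rfl fun v hv => ?_
    have := card_filter_ne_and_add_ite 0 fun b => Algebra.trace E F (b * v) = 0
    simp only [zero_mul, map_zero, if_true, card_filter_trace_mul_eq_zero hE hF
      (ne_zero_of_mem_powersBelow h (by omega) (mem_filter.1 hv).1)] at this
    omega
  · intro v₁ h₁ v₂ h₂ hne
    refine disjoint_left.2 fun b hb₁ hb₂ => hne ?_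
    rw [mem_filter] at hb₁ hb₂
    exact eq_of_trace_mul_eq_zero hE hF h hb₁.2.1 (mem_filter.1 h₁).1 (mem_filter.1 h₂).1
      hb₁.2.2 hb₂.2.2

end Subfield

section Pairs

variable {p : ℕ} [Fact p.Prime] {F : Type*} [Field F] [Algebra (ZMod p) F]

lemma sum_sum_stdAddChar_trace (Δ : Finset F) :
    ∑ z ∈ ({0}ᶜ : Finset (ZMod p)), ∑ x ∈ Δ,
        ZMod.stdAddChar (Algebra.trace (ZMod p) F (algebraMap (ZMod p) F z * x)) =
      p * #{x ∈ Δ | Algebra.trace (ZMod p) F x = 0} - #Δ := by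
  rw [sum_comm]
  simp only [Algebra.trace_algebraMap_mul, sum_compl_zero_stdAddChar_mul, sum_sub_distrib,
    ← sum_filter, sum_const, nsmul_eq_mul, mul_one]
  ring

variable [Fintype F]

lemma card_filter_zmod_trace_eq_mul (c : ZMod p) :
    #{x | Algebra.trace (ZMod p) F x = c} * p = Fintype.card F := by
  simpa only [ZMod.card] using card_filter_trace_eq_mul_card (L := F) c

lemma card_filter_weight_mul (z : ZMod p) (b : F) (g : F → F) :
    #{xy : F × F | Algebra.trace (ZMod p) F (xy.1 + g xy.2) = 0 ∧
        Algebra.trace (ZMod p) F (algebraMap (ZMod p) F z * xy.1 + b * xy.2) ≠ 0} * p =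
      Fintype.card F *
        #{y | Algebra.trace (ZMod p) F (b * y) ≠ z * Algebra.trace (ZMod p) F (g y)} := by
  have hk (c : ZMod p) : #{x | Algebra.trace (ZMod p) F x = c} =
      #{x | Algebra.trace (ZMod p) F x = 0} :=
    Nat.eq_of_mul_eq_mul_right (Fact.out : p.Prime).pos
      ((card_filter_zmod_trace_eq_mul c).trans (card_filter_zmod_trace_eq_mul 0).symm)
  have hfilter (x y : F) : (Algebra.trace (ZMod p) F (x + g y) = 0 ∧
      Algebra.trace (ZMod p) F (algebraMap (ZMod p) F z * x + b * y) ≠ 0) ↔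
      (Algebra.trace (ZMod p) F x = -Algebra.trace (ZMod p) F (g y) ∧
        Algebra.trace (ZMod p) F (b * y) ≠ z * Algebra.trace (ZMod p) F (g y)) := by
    simp only [map_add, Algebra.trace_algebraMap_mul, ← eq_neg_iff_add_eq_zero]
    constructor <;> rintro ⟨hx, hy⟩ <;> refine ⟨hx, fun h => hy ?_⟩
    · linear_combination h + z * hx
    · linear_combination h - z * hx
  rw [filter_congr fun xy _ => hfilter xy.1 xy.2, card_filter_prod_of_card_fiber hk
    (fun y => -Algebra.trace (ZMod p) F (g y))
    (fun y => Algebra.trace (ZMod p) F (b * y) ≠ z * Algebra.trace (ZMod p) F (g y)),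
    mul_right_comm, card_filter_zmod_trace_eq_mul]

variable [DecidableEq F] {n : ℕ} {ω : F}

lemma sum_sum_exp_pow_trace (h : IsPrimitiveRoot (ω ^ (n - 1)) (n + 1)) :
    ∑ z ∈ ({0}ᶜ : Finset (ZMod p)), ∑ x ∈ ({x | x ^ (n + 1) = 1} : Finset F),
        Complex.exp (2 * Real.pi * Complex.I / p) ^
          (Algebra.trace (ZMod p) F (algebraMap (ZMod p) F z * x)).val =
      p * #{v ∈ powersBelow ω (n + 1) | Algebra.trace (ZMod p) F (v ^ (n - 1)) = 0} -
        (n + 1) := by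
  simp only [exp_pow_val_eq_stdAddChar]
  rw [sum_sum_stdAddChar_trace,
    card_filter_pow_powersBelow h fun x => Algebra.trace (ZMod p) F x = 0,
    card_pow_eq_one_of_isPrimitiveRoot_pow h]
  push_cast
  rfl

variable {E : Subfield F} [Fintype E]

lemma card_coset_add_ite_mul (hE : Fintype.card E = n) (hF : Fintype.card F = n ^ 2)
    (h : IsPrimitiveRoot (ω ^ (n - 1)) (n + 1)) {z : ZMod p} (hz : z ≠ 0) {b v v' : F}
    (hb : b ≠ 0) (hv : v ∈ powersBelow ω (n + 1)) (hv' : v' ∈ powersBelow ω (n + 1))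
    (hbv : Algebra.trace E F (b * v) = 0) (hvtr : Algebra.trace (ZMod p) F (v ^ (n - 1)) ≠ 0) :
    (#{e : E | e ≠ 0 ∧ Algebra.trace (ZMod p) F (b * (v' * e)) =
        z * Algebra.trace (ZMod p) F ((v' * e) ^ (n - 1))} +
      if Algebra.trace (ZMod p) F (v' ^ (n - 1)) = 0 then 1 else 0) * p =
      if v' = v then 0 else n := by
  -- `E` inherits a `ZMod p`-module structure from `F`; as an algebra it makes `ZMod p ⊆ E ⊆ F`
  -- a scalar tower.
  let := ZMod.algebraOfModule p E
  have hfilter (e : E) : (e ≠ 0 ∧ Algebra.trace (ZMod p) F (b * (v' * e)) =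
      z * Algebra.trace (ZMod p) F ((v' * e) ^ (n - 1))) ↔
      (e ≠ 0 ∧ Algebra.trace (ZMod p) F (algebraMap E F e * (b * v')) =
        z * Algebra.trace (ZMod p) F (v' ^ (n - 1))) := by
    refine and_congr_right fun he => ?_
    rw [mul_pow_sub_one_of_ne_zero hE he, show algebraMap E F e = e from rfl,
      show b * (v' * e) = e * (b * v') by ring]
  rw [filter_congr fun e _ => hfilter e]
  by_cases hv'v : v' = v
  · subst hv'v
    rw [if_pos rfl, if_neg hvtr, add_zero, filter_false_of_mem, card_empty, zero_mul]
    rintro e - ⟨-, he⟩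
    rw [Algebra.trace_algebraMap_mul_eq_trace_mul_trace, hbv, mul_zero, map_zero] at he
    exact mul_ne_zero hz hvtr he.symm
  · have hw : Algebra.trace E F (b * v') ≠ 0 := fun h0 =>
      hv'v (eq_of_trace_mul_eq_zero hE hF h hb hv' hv h0 hbv)
    have := card_filter_ne_and_add_ite 0 fun e : E =>
      Algebra.trace (ZMod p) F (algebraMap E F e * (b * v')) =
        z * Algebra.trace (ZMod p) F (v' ^ (n - 1))
    simp only [map_zero, zero_mul, eq_comm (a := (0 : ZMod p)), mul_eq_zero, hz, false_or] at this
    rw [this, if_neg hv'v]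
    simpa only [ZMod.card, hE] using card_filter_trace_algebraMap_mul_eq_mul_card (K := ZMod p) hw _

lemma card_filter_trace_mul_eq_mul_trace_pow (hE : Fintype.card E = n)
    (hF : Fintype.card F = n ^ 2) (h : IsPrimitiveRoot (ω ^ (n - 1)) (n + 1)) {z : ZMod p}
    (hz : z ≠ 0) {b v : F} (hb : b ≠ 0) (hv : v ∈ powersBelow ω (n + 1))
    (hbv : Algebra.trace E F (b * v) = 0) (hvtr : Algebra.trace (ZMod p) F (v ^ (n - 1)) ≠ 0) :
    (#{y | Algebra.trace (ZMod p) F (b * y) = z * Algebra.trace (ZMod p) F (y ^ (n - 1))} +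
      #{v' ∈ powersBelow ω (n + 1) | Algebra.trace (ZMod p) F (v' ^ (n - 1)) = 0}) * p =
      p + n * n := by
  have hn := one_lt_of_card_subfield_eq hE
  have h0 := card_filter_ne_and_add_ite 0 fun y =>
    Algebra.trace (ZMod p) F (b * y) = z * Algebra.trace (ZMod p) F (y ^ (n - 1))
  rw [if_pos (by simp [zero_pow (show n - 1 ≠ 0 by omega)]),
    card_filter_ne_zero_eq_sum_powersBelow hE hF h] at h0
  rw [← h0, card_filter, add_right_comm, ← sum_add_distrib, add_mul, sum_mul,
    sum_congr rfl fun v' hv' => card_coset_add_ite_mul hE hF h hz hb hv hv' hbv hvtr,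
    ← add_sum_erase _ _ hv, if_pos rfl,
    sum_congr rfl fun v' hv' => if_neg (ne_of_mem_erase hv'), sum_const,
    card_erase_of_mem hv, card_powersBelow h]
  simp [add_comm, mul_comm]

lemma ncard_pairs (hE : Fintype.card E = n) (hF : Fintype.card F = n ^ 2)
    (h : IsPrimitiveRoot (ω ^ (n - 1)) (n + 1)) :
    (Set.ncard {ab : F × F | (∃ z : ZMod p, z ≠ 0 ∧ algebraMap (ZMod p) F z = ab.1) ∧
        ab.2 ≠ 0 ∧ ∃ v ∈ (powersBelow ω (n + 1) : Set F),
          Algebra.trace E F (ab.2 * v) = 0 ∧ Algebra.trace (ZMod p) F (v ^ (n - 1)) ≠ 0} : ℂ) =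
      (p - 1) * (n - 1) *
        (n + 1 - #{v ∈ powersBelow ω (n + 1) | Algebra.trace (ZMod p) F (v ^ (n - 1)) = 0}) := by
  have hprod : {ab : F × F | (∃ z : ZMod p, z ≠ 0 ∧ algebraMap (ZMod p) F z = ab.1) ∧
      ab.2 ≠ 0 ∧ ∃ v ∈ (powersBelow ω (n + 1) : Set F),
        Algebra.trace E F (ab.2 * v) = 0 ∧ Algebra.trace (ZMod p) F (v ^ (n - 1)) ≠ 0} =
      ↑(({0}ᶜ : Finset (ZMod p)).image (algebraMap (ZMod p) F) ×ˢ
        ({b | b ≠ 0 ∧ ∃ v ∈ powersBelow ω (n + 1), Algebra.trace E F (b * v) = 0 ∧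
          Algebra.trace (ZMod p) F (v ^ (n - 1)) ≠ 0} : Finset F)) := by
    ext; simp
  have hsplit := card_filter_add_card_filter_not (s := powersBelow ω (n + 1))
    fun v => Algebra.trace (ZMod p) F (v ^ (n - 1)) = 0
  rw [card_powersBelow h] at hsplit
  have hsplit' :
      (#{v ∈ powersBelow ω (n + 1) | Algebra.trace (ZMod p) F (v ^ (n - 1)) = 0} : ℂ) +
      #{v ∈ powersBelow ω (n + 1) | Algebra.trace (ZMod p) F (v ^ (n - 1)) ≠ 0} = n + 1 := by
    exact_mod_cast hsplit
  rw [hprod, Set.ncard_coe_finset, card_product,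
    card_image_of_injective _ (algebraMap (ZMod p) F).injective, card_compl, card_singleton,
    ZMod.card, card_filter_exists_trace_mul_eq_zero hE hF h]
  push_cast [(Fact.out : p.Prime).one_le, (one_lt_of_card_subfield_eq hE).le]
  linear_combination ((p : ℂ) - 1) * (n - 1) * hsplit'

lemma ncard_weight_mul (hE : Fintype.card E = n) (hF : Fintype.card F = n ^ 2)
    (h : IsPrimitiveRoot (ω ^ (n - 1)) (n + 1)) {z : ZMod p} (hz : z ≠ 0) {b v : F}
    (hb : b ≠ 0) (hv : v ∈ powersBelow ω (n + 1)) (hbv : Algebra.trace E F (b * v) = 0)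
    (hvtr : Algebra.trace (ZMod p) F (v ^ (n - 1)) ≠ 0) :
    (Set.ncard {xy : F × F | xy ≠ (0, 0) ∧
        Algebra.trace (ZMod p) F (xy.1 + xy.2 ^ (n - 1)) = 0 ∧
        Algebra.trace (ZMod p) F (algebraMap (ZMod p) F z * xy.1 + b * xy.2) ≠ 0} : ℂ) * p ^ 2 =
      n ^ 2 * (n ^ 2 * p - p - n ^ 2 +
        p * #{v ∈ powersBelow ω (n + 1) | Algebra.trace (ZMod p) F (v ^ (n - 1)) = 0}) := by
  have hset : {xy : F × F | xy ≠ (0, 0) ∧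
      Algebra.trace (ZMod p) F (xy.1 + xy.2 ^ (n - 1)) = 0 ∧
      Algebra.trace (ZMod p) F (algebraMap (ZMod p) F z * xy.1 + b * xy.2) ≠ 0} =
      ↑({xy : F × F | Algebra.trace (ZMod p) F (xy.1 + xy.2 ^ (n - 1)) = 0 ∧
        Algebra.trace (ZMod p) F (algebraMap (ZMod p) F z * xy.1 + b * xy.2) ≠ 0} :
        Finset _) := by
    ext ⟨x, y⟩
    simp only [Set.mem_ofPred_eq, coe_filter, mem_univ, true_and, and_iff_right_iff_imp]
    rintro ⟨-, hB⟩ h0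
    rw [Prod.mk.injEq] at h0
    simp [h0.1, h0.2] at hB
  have hW := card_filter_weight_mul z b (· ^ (n - 1))
  have hM := card_filter_trace_mul_eq_mul_trace_pow hE hF h hz hb hv hbv hvtr
  have hcompl := card_filter_add_card_filter_not (s := univ) fun y =>
    Algebra.trace (ZMod p) F (b * y) = z * Algebra.trace (ZMod p) F (y ^ (n - 1))
  rw [card_univ, hF] at hcompl
  rw [hF] at hW
  have hW' := congrArg (Nat.cast : ℕ → ℂ) hW
  have hM' := congrArg (Nat.cast : ℕ → ℂ) hM
  have hcompl' := congrArg (Nat.cast : ℕ → ℂ) hcompl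
  push_cast at hW' hM' hcompl'
  rw [hset, Set.ncard_coe_finset]
  linear_combination (p : ℂ) * hW' + (n : ℂ) ^ 2 * p * hcompl' - (n : ℂ) ^ 2 * hM'

end Pairs

/-- **Statement 11.** The number of pairs `(a,b)` with `a ∈ F_p^*`, `b ∈ F_q^*`, such that
the unique `v ∈ Γ` with `Tr_{q/t}(bv) = 0` satisfies `Tr(v^{p^t-1}) ≠ 0`, is
`((p²-2p+1)(p^m-1) - (p^{t+1}-p^t-p+1)·S)/p`; moreover every such pair has
`wt(a,b) = (p^{2m-2}-p^{m-2})(p-1) + p^{m-2}(p^t + S)`. -/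
theorem stmt12 (p t m : ℕ) [Fact p.Prime] (ht : 2 < t) (hm : m = 2 * t)
    (F : Type) [Field F] [Fintype F] [DecidableEq F] [Algebra (ZMod p) F]
    (hF : Fintype.card F = p ^ m)
    (E : Subfield F) (hE : Nat.card E = p ^ t)
    (α : Fˣ) (hα : ∀ x : Fˣ, x ∈ Subgroup.zpowers α)
    (Γ : Set F) (hΓ : Γ = {v : F | ∃ j ≤ p ^ t, v = (α : F) ^ j})
    (ζ : ℂ) (hζ : ζ = Complex.exp (2 * Real.pi * Complex.I / p))
    (χ : F → ℂ) (hχ : ∀ x, χ x = ζ ^ (Algebra.trace (ZMod p) F x).val)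
    (Δ : Finset F) (hΔ : Δ = univ.filter (fun x : F => x ^ (p ^ t + 1) = 1))
    (S : ℂ) (hS : S = ∑ z ∈ ({0}ᶜ : Finset (ZMod p)), ∑ x ∈ Δ, χ (algebraMap (ZMod p) F z * x))
    (wt : F → F → ℕ)
    (hwt : ∀ a b : F, wt a b = Set.ncard {xy : F × F | xy ≠ (0, 0) ∧
      Algebra.trace (ZMod p) F (xy.1 + xy.2 ^ (p ^ t - 1)) = 0 ∧
      Algebra.trace (ZMod p) F (a * xy.1 + b * xy.2) ≠ 0})
    (P : Set (F × F))
    (hP : P = {ab : F × F | (∃ z : ZMod p, z ≠ 0 ∧ algebraMap (ZMod p) F z = ab.1) ∧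
      ab.2 ≠ 0 ∧ ∃ v ∈ Γ, Algebra.trace E F (ab.2 * v) = 0 ∧
        Algebra.trace (ZMod p) F (v ^ (p ^ t - 1)) ≠ 0}) :
    (P.ncard : ℂ) = (((p : ℂ) ^ 2 - 2 * (p : ℂ) + 1) * ((p : ℂ) ^ m - 1)
        - ((p : ℂ) ^ (t + 1) - (p : ℂ) ^ t - (p : ℂ) + 1) * S) / p ∧
      ∀ ab ∈ P, (wt ab.1 ab.2 : ℂ) =
        ((p : ℂ) ^ (2 * m - 2) - (p : ℂ) ^ (m - 2)) * ((p : ℂ) - 1)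
          + (p : ℂ) ^ (m - 2) * ((p : ℂ) ^ t + S) := by
  classical
  have hE' : Fintype.card E = p ^ t := Nat.card_eq_fintype_card (α := E) ▸ hE
  have hF' : Fintype.card F = (p ^ t) ^ 2 := by rw [hF, hm, pow_mul']
  have hω := isPrimitiveRoot_pow_sub_one_of_card_eq_sq hα hF'
  have hΓ' : Γ = powersBelow (α : F) (p ^ t + 1) := by
    ext v
    simp [hΓ, mem_powersBelow, eq_comm]
  have hST : S = p * #{v ∈ powersBelow (α : F) (p ^ t + 1) |
      Algebra.trace (ZMod p) F (v ^ (p ^ t - 1)) = 0} - (p ^ t + 1) := by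
    rw [hS, hΔ]
    simpa only [hχ, hζ, Nat.cast_pow] using sum_sum_exp_pow_trace hω
  have hp0 : (p : ℂ) ≠ 0 := by exact_mod_cast (Fact.out : p.Prime).ne_zero
  constructor
  · rw [hP, hΓ', eq_div_iff hp0, ncard_pairs hE' hF' hω, hST, hm, pow_mul', pow_succ]
    push_cast
    ring
  · rintro ⟨a, b⟩ hab
    rw [hP, hΓ'] at hab
    obtain ⟨⟨z, hz, rfl⟩, hb, v, hv, hbv, hvtr⟩ := hab
    have hW := ncard_weight_mul hE' hF' hω hz hb hv hbv hvtr
    push_cast at hW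
    have hpow_m : (p : ℂ) ^ (m - 2) = ((p : ℂ) ^ (t - 1)) ^ 2 := by
      rw [← pow_mul]; congr 1; omega
    have hpow_2m : (p : ℂ) ^ (2 * m - 2) = ((p : ℂ) ^ (t - 1)) ^ 2 * ((p : ℂ) ^ t) ^ 2 := by
      rw [← pow_mul, ← pow_mul, ← pow_add]; congr 1; omega
    have hpow_t : (p : ℂ) ^ t = (p : ℂ) ^ (t - 1) * p := by
      rw [← pow_succ]; congr 1; omega
    rw [hwt, ← mul_left_inj' (pow_ne_zero 2 hp0), hW, hST, hpow_m, hpow_2m, hpow_t]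
    ring
end

section
/- The number of elements b ∈ F_q^* such that the unique v ∈ Γ with Tr_{q/t}(bv) = 0 satisfies Tr(v^{p^t−1}) = 0 is exactly ((p^m − 1) + (p^t − 1)·S)/p. -/
/-!
Put `q = p^t = |E|`, so that `[F : E] = 2` and the kernel of `Tr_{F/E}` is an `E`-line.
If `b ≠ 0` and `Tr_{F/E}(b v) = Tr_{F/E}(b w) = 0`, then `w = c v` with `c ∈ E^×`, so
`w^{q-1} = v^{q-1}`. As `Γ = {α^j : j ≤ q}` and `v ↦ v^{q-1}` maps `Γ` bijectively onto
`Δ = μ_{q+1}`, every `b` has at most one admissible `v ∈ Γ`, while every `v` has exactly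
`q - 1` admissible `b`. The count is thus `(q - 1) · #{x ∈ Δ : Tr x = 0}`, and orthogonality
of the additive characters of `F_p` gives `p · #{x ∈ Δ : Tr x = 0} = #Δ + S = q + 1 + S`.
-/

open Finset Module

section FiniteFieldExtension

variable {K L : Type*} [Field K] [Field L] [Algebra K L] [Finite L]

theorem finrank_eq_of_natCard_eq_pow {n : ℕ} (h : Nat.card L = Nat.card K ^ n) :
    finrank K L = n := by
  have : Finite K := .of_injective _ (algebraMap K L).injective
  exact Nat.pow_right_injective Finite.one_lt_card
    (by dsimp only; rw [← natCard_eq_pow_finrank, h])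

theorem IsPrimitiveRoot.pow_natCard_sub_one (hdeg : finrank K L = 2) {α : L}
    (hα : IsPrimitiveRoot α (Nat.card L - 1)) :
    IsPrimitiveRoot (α ^ (Nat.card K - 1)) (Nat.card K + 1) := by
  have : Finite K := .of_injective _ (algebraMap K L).injective
  have hq : 1 < Nat.card K := Finite.one_lt_card
  refine hα.pow (Nat.sub_pos_of_lt Finite.one_lt_card) ?_
  rw [natCard_eq_pow_finrank (K := K), hdeg]
  zify [hq.le, Nat.one_le_pow 2 _ (by omega : 0 < Nat.card K)]
  ring

theorem finrank_ker_trace_add_one :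
    finrank K (LinearMap.ker (Algebra.trace K L)) + 1 = finrank K L := by
  rw [← LinearMap.finrank_range_add_finrank_ker (Algebra.trace K L),
    LinearMap.range_eq_top.mpr (Algebra.trace_surjective K L), finrank_top, finrank_self, add_comm]

theorem exists_smul_eq_of_trace_eq_zero (hdeg : finrank K L = 2) {u x : L} (hu : u ≠ 0)
    (htu : Algebra.trace K L u = 0) (htx : Algebra.trace K L x = 0) : ∃ c : K, c • u = x := by
  have hker : finrank K (LinearMap.ker (Algebra.trace K L)) = 1 := by
    have := finrank_ker_trace_add_one (K := K) (L := L)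
    omega
  obtain ⟨c, hc⟩ := (finrank_eq_one_iff_of_nonzero' (⟨u, htu⟩ : LinearMap.ker _)
    (Subtype.coe_ne_coe.mp hu)).mp hker ⟨x, htx⟩
  exact ⟨c, congrArg Subtype.val hc⟩

theorem natCard_trace_mul_eq_zero {v : L} (hv : v ≠ 0) :
    Nat.card {b : L // Algebra.trace K L (b * v) = 0} = Nat.card K ^ (finrank K L - 1) := by
  have hker := finrank_ker_trace_add_one (K := K) (L := L)
  rw [Nat.card_congr ((Equiv.mulRight₀ v hv).subtypeEquiv fun _ => Iff.rfl :
      {b : L // Algebra.trace K L (b * v) = 0} ≃ LinearMap.ker (Algebra.trace K L)),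
    Module.natCard_eq_pow_finrank (K := K)]
  congr 1
  omega

theorem pow_card_sub_one_eq_of_trace_mul_eq_zero (hdeg : finrank K L = 2) {b u w : L}
    (hb : b ≠ 0) (hu : u ≠ 0) (hw : w ≠ 0) (htu : Algebra.trace K L (b * u) = 0)
    (htw : Algebra.trace K L (b * w) = 0) : w ^ (Nat.card K - 1) = u ^ (Nat.card K - 1) := by
  obtain ⟨c, hc⟩ := exists_smul_eq_of_trace_eq_zero hdeg (mul_ne_zero hb hu) htu htw
  rw [Algebra.smul_def, mul_left_comm] at hc
  have hwc : w = algebraMap K L c * u := (mul_left_cancel₀ hb hc).symm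
  have hc0 : c ≠ 0 := by rintro rfl; simp [hwc] at hw
  have : Finite K := .of_injective _ (algebraMap K L).injective
  have : Fintype K := .ofFinite K
  rw [hwc, mul_pow, ← map_pow, Nat.card_eq_fintype_card,
    FiniteField.pow_card_sub_one_eq_one c hc0, map_one, one_mul]

end FiniteFieldExtension

theorem IsPrimitiveRoot.card_filter_pow_eq_one_and {R : Type*} [CommRing R] [IsDomain R]
    [Fintype R] [DecidableEq R] {ω : R} {k : ℕ} [NeZero k] (h : IsPrimitiveRoot ω k)
    (C : R → Prop) [DecidablePred C] :
    #{x | x ^ k = 1 ∧ C x} = #{j ∈ range k | C (ω ^ j)} := by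
  have himage :
      ({x | x ^ k = 1 ∧ C x} : Finset R) = {j ∈ range k | C (ω ^ j)}.image (ω ^ ·) := by
    ext x
    simp only [mem_filter, mem_univ, true_and, mem_image, mem_range]
    constructor
    · rintro ⟨hx, hC⟩
      obtain ⟨j, hj, rfl⟩ := h.eq_pow_of_pow_eq_one hx
      exact ⟨j, ⟨hj, hC⟩, rfl⟩
    · rintro ⟨j, ⟨-, hC⟩, rfl⟩
      exact ⟨by rw [pow_right_comm, h.pow_eq_one, one_pow], hC⟩
  rw [himage, card_image_of_injOn]
  intro i hi j hj hij
  exact h.pow_inj (mem_range.mp (mem_filter.mp hi).1) (mem_range.mp (mem_filter.mp hj).1) hij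

theorem IsPrimitiveRoot.sum_pow_val_mul {R : Type*} [CommRing R] [IsDomain R] {n : ℕ} [NeZero n]
    {ζ : R} (hζ : IsPrimitiveRoot ζ n) (a : ZMod n) :
    ∑ z : ZMod n, ζ ^ (z * a).val = if a = 0 then (n : R) else 0 := by
  simpa [AddChar.zmodChar_apply] using
    AddChar.sum_mulShift a (AddChar.zmodChar_primitive_of_primitive_root n hζ)

theorem sum_sum_pow_val_trace_mul {R F : Type*} [CommRing R] [IsDomain R] [CommRing F] {n : ℕ}
    [NeZero n] [Algebra (ZMod n) F] {ζ : R} (hζ : IsPrimitiveRoot ζ n) (A : Finset F) :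
    ∑ z : ZMod n, ∑ x ∈ A, ζ ^ (Algebra.trace (ZMod n) F (algebraMap (ZMod n) F z * x)).val
      = n * #{x ∈ A | Algebra.trace (ZMod n) F x = 0} := by
  simp_rw [← Algebra.smul_def, map_smul, smul_eq_mul]
  rw [sum_comm]
  simp_rw [hζ.sum_pow_val_mul]
  rw [sum_ite, sum_const_zero, add_zero, sum_const, nsmul_eq_mul, mul_comm]

section Counting

variable {K L : Type*} [Field K] [DecidableEq K] [Field L] [Algebra K L] [Fintype L] [DecidableEq L]

theorem card_filter_ne_zero_trace_mul_eq_zero (hdeg : finrank K L = 2) {v : L} (hv : v ≠ 0) :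
    #{b | b ≠ 0 ∧ Algebra.trace K L (b * v) = 0} = Nat.card K - 1 := by
  have herase : ({b | b ≠ 0 ∧ Algebra.trace K L (b * v) = 0} : Finset L)
      = ({b | Algebra.trace K L (b * v) = 0} : Finset L).erase 0 := by
    ext b
    simp only [mem_filter, mem_univ, true_and, mem_erase]
  rw [herase, card_erase_of_mem (by simp), ← Fintype.card_subtype, ← Nat.card_eq_fintype_card,
    natCard_trace_mul_eq_zero hv, hdeg, pow_one]

theorem card_filter_exists_trace_mul_pow_eq_zero (hdeg : finrank K L = 2) {α : L}
    (hα : IsPrimitiveRoot α (Nat.card L - 1)) (C : L → Prop) [DecidablePred C] :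
    #{b | b ≠ 0 ∧ ∃ j < Nat.card K + 1,
        Algebra.trace K L (b * α ^ j) = 0 ∧ C ((α ^ j) ^ (Nat.card K - 1))}
      = (Nat.card K - 1) * #{x | x ^ (Nat.card K + 1) = 1 ∧ C x} := by
  set q := Nat.card K
  have hω : IsPrimitiveRoot (α ^ (q - 1)) (q + 1) := hα.pow_natCard_sub_one hdeg
  have hα0 (j : ℕ) : α ^ j ≠ 0 :=
    pow_ne_zero j (hα.ne_zero (Nat.sub_pos_of_lt Finite.one_lt_card).ne')
  have hunion : ({b | b ≠ 0 ∧ ∃ j < q + 1,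
      Algebra.trace K L (b * α ^ j) = 0 ∧ C ((α ^ j) ^ (q - 1))} : Finset L)
      = {j ∈ range (q + 1) | C ((α ^ (q - 1)) ^ j)}.biUnion
          fun j => {b | b ≠ 0 ∧ Algebra.trace K L (b * α ^ j) = 0} := by
    ext b
    simp only [mem_filter, mem_univ, true_and, mem_biUnion, mem_range, pow_right_comm α]
    aesop
  rw [hunion, card_biUnion,
    sum_congr rfl fun j _ => card_filter_ne_zero_trace_mul_eq_zero hdeg (hα0 j), sum_const,
    smul_eq_mul, mul_comm, hω.card_filter_pow_eq_one_and]
  intro i hi j hj hij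
  refine disjoint_filter.mpr fun b _ hbi hbj => hij ?_
  have := pow_card_sub_one_eq_of_trace_mul_eq_zero hdeg hbi.1 (hα0 j) (hα0 i) hbj.2 hbi.2
  rw [pow_right_comm, pow_right_comm α j] at this
  exact hω.pow_inj (mem_range.mp (mem_filter.mp hi).1) (mem_range.mp (mem_filter.mp hj).1) this

end Counting

theorem stmt13_general (p t m : ℕ) [Fact p.Prime] (hm : m = 2 * t)
    (F : Type) [Field F] [Fintype F] [DecidableEq F] [Algebra (ZMod p) F]
    (hF : Fintype.card F = p ^ m)
    (E : Subfield F) (hE : Nat.card E = p ^ t)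
    (α : Fˣ) (hα : ∀ x : Fˣ, x ∈ Subgroup.zpowers α)
    (Γ : Set F) (hΓ : Γ = {v : F | ∃ j ≤ p ^ t, v = (α : F) ^ j})
    (ζ : ℂ) (hζ : ζ = Complex.exp (2 * Real.pi * Complex.I / p))
    (χ : F → ℂ) (hχ : ∀ x, χ x = ζ ^ (Algebra.trace (ZMod p) F x).val)
    (Δ : Finset F) (hΔ : Δ = univ.filter (fun x : F => x ^ (p ^ t + 1) = 1))
    (S : ℂ) (hS : S = ∑ z ∈ ({0}ᶜ : Finset (ZMod p)), ∑ x ∈ Δ, χ (algebraMap (ZMod p) F z * x)) :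
    (Set.ncard {b : F | b ≠ 0 ∧ ∃ v ∈ Γ, Algebra.trace E F (b * v) = 0 ∧
        Algebra.trace (ZMod p) F (v ^ (p ^ t - 1)) = 0} : ℂ)
      = (((p : ℂ) ^ m - 1) + ((p : ℂ) ^ t - 1) * S) / p := by
  have hdeg : finrank E F = 2 :=
    finrank_eq_of_natCard_eq_pow (by rw [Nat.card_eq_fintype_card, hF, hE, hm, pow_mul'])
  have hα' : IsPrimitiveRoot (α : F) (Nat.card F - 1) := by
    rw [← Nat.card_units, ← orderOf_eq_card_of_forall_mem_zpowers hα]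
    exact IsPrimitiveRoot.coe_units_iff.mpr (.orderOf α)
  have hΔ' : Δ = ({x | x ^ (Nat.card E + 1) = 1} : Finset F) := by rw [hΔ, hE]
  have hchar : p * #{x ∈ Δ | Algebra.trace (ZMod p) F x = 0} = (p : ℂ) ^ t + 1 + S := by
    have hζ' : IsPrimitiveRoot ζ p := hζ ▸ Complex.isPrimitiveRoot_exp p (NeZero.ne p)
    have hΔcard : #Δ = p ^ t + 1 := by
      simpa [hΔ', hE] using
        (hα'.pow_natCard_sub_one hdeg).card_filter_pow_eq_one_and fun _ => True
    rw [← sum_sum_pow_val_trace_mul hζ', ← sum_add_sum_compl {0}, sum_singleton, hS]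
    simp [hχ, hΔcard]
  have hset : {b : F | b ≠ 0 ∧ ∃ v ∈ Γ, Algebra.trace E F (b * v) = 0 ∧
        Algebra.trace (ZMod p) F (v ^ (p ^ t - 1)) = 0}
      = ↑({b | b ≠ 0 ∧ ∃ j < Nat.card E + 1, Algebra.trace E F (b * α ^ j) = 0 ∧
        Algebra.trace (ZMod p) F ((α ^ j) ^ (Nat.card E - 1)) = 0} : Finset F) := by
    ext b
    simp [hΓ, hE]
  rw [hset, Set.ncard_coe_finset, card_filter_exists_trace_mul_pow_eq_zero hdeg hα'
      fun x => Algebra.trace (ZMod p) F x = 0,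
    ← filter_filter, ← hΔ', hE, eq_div_iff (NeZero.ne (p : ℂ)), hm]
  push_cast [Nat.one_le_pow t p (NeZero.pos p)]
  linear_combination ((p : ℂ) ^ t - 1) * hchar

/-- The number of `b ∈ F_q^*` such that the unique `v ∈ Γ` with
`Tr_{q/t}(bv) = 0` satisfies `Tr(v^{p^t-1}) = 0` is exactly `((p^m-1) + (p^t-1)·S)/p`. -/
theorem stmt13 (p t m : ℕ) [Fact p.Prime] (ht : 2 < t) (hm : m = 2 * t)
    (F : Type) [Field F] [Fintype F] [DecidableEq F] [Algebra (ZMod p) F]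
    (hF : Fintype.card F = p ^ m)
    (E : Subfield F) (hE : Nat.card E = p ^ t)
    (α : Fˣ) (hα : ∀ x : Fˣ, x ∈ Subgroup.zpowers α)
    (Γ : Set F) (hΓ : Γ = {v : F | ∃ j ≤ p ^ t, v = (α : F) ^ j})
    (ζ : ℂ) (hζ : ζ = Complex.exp (2 * Real.pi * Complex.I / p))
    (χ : F → ℂ) (hχ : ∀ x, χ x = ζ ^ (Algebra.trace (ZMod p) F x).val)
    (Δ : Finset F) (hΔ : Δ = univ.filter (fun x : F => x ^ (p ^ t + 1) = 1))
    (S : ℂ) (hS : S = ∑ z ∈ ({0}ᶜ : Finset (ZMod p)), ∑ x ∈ Δ, χ (algebraMap (ZMod p) F z * x)) :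
    (Set.ncard {b : F | b ≠ 0 ∧ ∃ v ∈ Γ, Algebra.trace E F (b * v) = 0 ∧
        Algebra.trace (ZMod p) F (v ^ (p ^ t - 1)) = 0} : ℂ)
      = (((p : ℂ) ^ m - 1) + ((p : ℂ) ^ t - 1) * S) / p :=
  stmt13_general p t m hm F hF E hE α hα Γ hΓ ζ hζ χ hχ Δ hΔ S hS
end

section
/- Let w_3 = (p^{2m−2} − p^{m−2})(p−1) − p^{m−2}(p^t(p−1) − S) and w_4 = (p^{2m−2} − p^{m−2})(p−1) + p^{m−2}(p^t + S). Then w_3 > 0 and p·w_3 > (p−1)·w_4, i.e., w_3/w_4 > (p−1)/p. -/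
/-!
Every term of `S` is a `p`-th root of unity and `Δ` has at most `p^t + 1` elements, so
`|S| ≤ (p - 1)(p^t + 1)`. With `T = p^t ≥ p^3`, after dividing by `p^{m-2}` the difference
`p·w_3 - (p - 1)·w_4` is at least `(p - 1)(T^2 - (p + 2)T - 2) > 0`, and `w_3` exceeds it.
-/

open Finset

lemma card_filter_pow_eq_one_le {R : Type*} [CommRing R] [IsDomain R] [Fintype R] [DecidableEq R]
    {n : ℕ} (hn : 0 < n) : #{x : R | x ^ n = 1} ≤ n := by
  calc #{x : R | x ^ n = 1} ≤ #(Polynomial.nthRootsFinset n (1 : R)) :=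
        card_le_card fun x hx => (Polynomial.mem_nthRootsFinset hn 1).2 (mem_filter.1 hx).2
    _ ≤ n := by
        rw [Polynomial.nthRootsFinset_def]
        exact (Multiset.toFinset_card_le _).trans (Polynomial.card_nthRoots n 1)

lemma norm_sum_sum_le_card_mul_card {α β E : Type*} [SeminormedAddCommGroup E]
    {s : Finset α} {t : Finset β} {f : α → β → E} (hf : ∀ a ∈ s, ∀ b ∈ t, ‖f a b‖ ≤ 1) :
    ‖∑ a ∈ s, ∑ b ∈ t, f a b‖ ≤ #s * #t := by
  rw [← sum_product']
  refine (norm_sum_le_of_le _ fun x hx =>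
    hf x.1 (mem_product.1 hx).1 x.2 (mem_product.1 hx).2).trans ?_
  simp [card_product]

lemma norm_exp_two_pi_I_div_pow {n : ℕ} (hn : n ≠ 0) (k : ℕ) :
    ‖Complex.exp (2 * Real.pi * Complex.I / n) ^ k‖ = 1 := by
  rw [norm_pow, (Complex.isPrimitiveRoot_exp n hn).norm'_eq_one hn, one_pow]

lemma sub_mul_sq_sub_sub_pos {P T S : ℤ} (hP : 2 ≤ P) (hT : P ^ 3 ≤ T)
    (hS : -((P - 1) * (T + 1)) ≤ S) : 0 < (T ^ 2 - 1) * (P - 1) - T * (P ^ 2 - 1) + S := by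
  have hP3 : P + 6 ≤ P ^ 3 := by
    nlinarith [mul_nonneg (sub_nonneg.2 hP) (add_nonneg (sq_nonneg (P + 1)) zero_le_two)]
  have hT : 2 < T * (T - P - 2) := by nlinarith
  nlinarith [mul_pos (by linarith : (0 : ℤ) < P - 1) (by linarith : 0 < T * (T - P - 2) - 2)]

lemma weights_pos_and_ratio_gt {P T A S : ℤ} (hP : 2 ≤ P) (hT : P ^ 3 ≤ T) (hA : 0 < A)
    (hS : -((P - 1) * (T + 1)) ≤ S) :
    0 < (A * T ^ 2 - A) * (P - 1) - A * (T * (P - 1) - S) ∧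
      P * ((A * T ^ 2 - A) * (P - 1) - A * (T * (P - 1) - S)) >
        (P - 1) * ((A * T ^ 2 - A) * (P - 1) + A * (T + S)) := by
  have hY := mul_pos hA (sub_mul_sq_sub_sub_pos hP hT hS)
  have hT0 : 0 < T := lt_of_lt_of_le (by positivity) hT
  have hPP : 0 < A * (T * P * (P - 1)) :=
    mul_pos hA (mul_pos (mul_pos hT0 (by linarith)) (by linarith))
  constructor <;> linarith

theorem stmt16_general (p t m : ℕ) [Fact p.Prime] (ht : 2 < t) (hm : m = 2 * t)
    (F : Type) [Field F] [Fintype F] [DecidableEq F] [Algebra (ZMod p) F]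
    (ζ : ℂ) (hζ : ζ = Complex.exp (2 * Real.pi * Complex.I / p))
    (χ : F → ℂ) (hχ : ∀ x, χ x = ζ ^ (Algebra.trace (ZMod p) F x).val)
    (Δ : Finset F) (hΔ : Δ = univ.filter (fun x : F => x ^ (p ^ t + 1) = 1))
    (S : ℤ)
    (hS : (S : ℂ) = ∑ z ∈ ({0}ᶜ : Finset (ZMod p)), ∑ x ∈ Δ, χ (algebraMap (ZMod p) F z * x))
    (w3 w4 : ℤ)
    (hw3 : w3 = ((p : ℤ) ^ (2 * m - 2) - (p : ℤ) ^ (m - 2)) * ((p : ℤ) - 1)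
      - (p : ℤ) ^ (m - 2) * ((p : ℤ) ^ t * ((p : ℤ) - 1) - S))
    (hw4 : w4 = ((p : ℤ) ^ (2 * m - 2) - (p : ℤ) ^ (m - 2)) * ((p : ℤ) - 1)
      + (p : ℤ) ^ (m - 2) * ((p : ℤ) ^ t + S)) :
    0 < w3 ∧ (p : ℤ) * w3 > ((p : ℤ) - 1) * w4 := by
  have hp : p.Prime := Fact.out
  have hΔcard : #Δ ≤ p ^ t + 1 := hΔ ▸ card_filter_pow_eq_one_le (by positivity)
  have hSnorm : ‖(S : ℂ)‖ ≤ (p - 1 : ℕ) * #Δ := by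
    rw [hS]
    convert norm_sum_sum_le_card_mul_card fun _ _ _ _ => ?_
    · rw [card_compl, card_singleton, ZMod.card]
    · rw [hχ, hζ, norm_exp_two_pi_I_div_pow hp.ne_zero]
  have hSbound : |S| ≤ ((p : ℤ) - 1) * ((p : ℤ) ^ t + 1) := by
    rw [Complex.norm_intCast] at hSnorm
    have : (((p - 1 : ℕ) * #Δ : ℕ) : ℝ) ≤ (((p - 1) * (p ^ t + 1) : ℕ) : ℝ) := by
      gcongr
    push_cast [hp.one_le] at hSnorm this
    exact_mod_cast hSnorm.trans this
  have hpow : (p : ℤ) ^ (2 * m - 2) = (p : ℤ) ^ (m - 2) * ((p : ℤ) ^ t) ^ 2 := by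
    rw [← pow_mul, ← pow_add]; congr 1; omega
  rw [hw3, hw4, hpow]
  exact weights_pos_and_ratio_gt (by exact_mod_cast hp.two_le)
    (pow_le_pow_right₀ (by exact_mod_cast hp.one_le) ht) (pow_pos (by exact_mod_cast hp.pos) _)
    (neg_le_of_abs_le hSbound)

/-- With `w_3 = (p^{2m-2}-p^{m-2})(p-1) - p^{m-2}(p^t(p-1)-S)` and
`w_4 = (p^{2m-2}-p^{m-2})(p-1) + p^{m-2}(p^t+S)`, one has `w_3 > 0` and
`p·w_3 > (p-1)·w_4`, i.e. `w_3/w_4 > (p-1)/p`. (`S` is a rational integer.) -/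
theorem stmt16 (p t m : ℕ) [Fact p.Prime] (ht : 2 < t) (hm : m = 2 * t)
    (F : Type) [Field F] [Fintype F] [DecidableEq F] [Algebra (ZMod p) F]
    (hF : Fintype.card F = p ^ m)
    (ζ : ℂ) (hζ : ζ = Complex.exp (2 * Real.pi * Complex.I / p))
    (χ : F → ℂ) (hχ : ∀ x, χ x = ζ ^ (Algebra.trace (ZMod p) F x).val)
    (Δ : Finset F) (hΔ : Δ = univ.filter (fun x : F => x ^ (p ^ t + 1) = 1))
    (S : ℤ)
    (hS : (S : ℂ) = ∑ z ∈ ({0}ᶜ : Finset (ZMod p)), ∑ x ∈ Δ, χ (algebraMap (ZMod p) F z * x))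
    (w3 w4 : ℤ)
    (hw3 : w3 = ((p : ℤ) ^ (2 * m - 2) - (p : ℤ) ^ (m - 2)) * ((p : ℤ) - 1)
      - (p : ℤ) ^ (m - 2) * ((p : ℤ) ^ t * ((p : ℤ) - 1) - S))
    (hw4 : w4 = ((p : ℤ) ^ (2 * m - 2) - (p : ℤ) ^ (m - 2)) * ((p : ℤ) - 1)
      + (p : ℤ) ^ (m - 2) * ((p : ℤ) ^ t + S)) :
    0 < w3 ∧ (p : ℤ) * w3 > ((p : ℤ) - 1) * w4 :=
  stmt16_general p t m ht hm F ζ hζ χ hχ Δ hΔ S hS w3 w4 hw3 hw4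
end
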